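/- arXiv:2502.17461 — 2 statements merged into one kernel-verified Lean document; each statement's English description precedes it below -/
import Mathlib

section
/- Let N be a WR0-realizable reaction network on n species. Then there exists a unique WR0 network N' such that N is realizable by N'; equivalently, if for each choice of positive rate constants κ one denotes by (N_κ, k_κ) a WR0 realization of the mass-action system (N,κ), then the underlying network N_κ is the same for all choices of κ. -/
/-!
Basic definitions for reaction networks, following the paper
"Weakly reversible deficiency zero realizations of reaction networks".
-/

noncomputable section

open Finset

/-- A complex (vertex of a Euclidean embedded graph) is a point of `ℝ^n`. -/
abbrev Cplx (n : ℕ) : Type := Fin n → ℝ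

/-- A reaction network on `n` species: a finite directed graph with vertices in `ℝ^n`,
given by its finite set of edges (reactions) `y → y'` with `y ≠ y'`.
Every vertex (complex) is incident to at least one edge, since the complexes are by
definition the endpoints of the edges. -/
structure ReactionNetwork (n : ℕ) where
  reactions : Finset (Cplx n × Cplx n)
  no_loops : ∀ r ∈ reactions, r.1 ≠ r.2

namespace ReactionNetwork

variable {n : ℕ}

/-- `κ` is a choice of positive rate constants for `N`. -/
def PosRates (N : ReactionNetwork n) (κ : Cplx n × Cplx n → ℝ) : Prop :=
  ∀ r ∈ N.reactions, 0 < κ r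

/-- The monomial `x^y = x₁^{y₁} ⋯ x_n^{y_n}`. -/
def monomial (x y : Cplx n) : ℝ := ∏ i, x i ^ y i

/-- The mass-action vector field `f_{(N,κ)}(x) = ∑_{y→y'∈N} κ_{y→y'} x^y (y'-y)`. -/
def massAction (N : ReactionNetwork n) (κ : Cplx n × Cplx n → ℝ) (x : Cplx n) : Cplx n :=
  ∑ r ∈ N.reactions, (κ r * monomial x r.1) • (r.2 - r.1)

/-- The source complexes of `N`. -/
def sources (N : ReactionNetwork n) : Finset (Cplx n) := N.reactions.image Prod.fst

/-- The complexes (vertices) of `N`. -/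
def complexes (N : ReactionNetwork n) : Finset (Cplx n) :=
  N.reactions.image Prod.fst ∪ N.reactions.image Prod.snd

/-- Undirected connectivity between complexes of `N`. -/
def linked (N : ReactionNetwork n) : Cplx n → Cplx n → Prop :=
  Relation.ReflTransGen (fun u v => (u, v) ∈ N.reactions ∨ (v, u) ∈ N.reactions)

/-- The linkage class (connected component) of the complex `y`. -/
def linkageClass (N : ReactionNetwork n) (y : Cplx n) : Set (Cplx n) :=
  {z | z ∈ N.complexes ∧ N.linked y z}

/-- The linkage class partition of `N`: the partition of its complexes into the
vertex sets of its connected components. -/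
def linkagePartition (N : ReactionNetwork n) : Set (Set (Cplx n)) :=
  {C | ∃ y ∈ N.complexes, C = N.linkageClass y}

/-- The number of linkage classes of `N`. -/
def numLinkageClasses (N : ReactionNetwork n) : ℕ :=
  N.linkagePartition.ncard

/-- The stoichiometric subspace `S_N = span{y' - y | y → y' ∈ N}`. -/
def stoichSubspace (N : ReactionNetwork n) : Submodule ℝ (Cplx n) :=
  Submodule.span ℝ {d | ∃ r ∈ N.reactions, d = r.2 - r.1}

/-- `N` is weakly reversible: every connected component is strongly connected,
i.e. every reaction is part of a directed cycle. -/
def WeaklyReversible (N : ReactionNetwork n) : Prop :=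
  ∀ r ∈ N.reactions,
    Relation.ReflTransGen (fun u v => (u, v) ∈ N.reactions) r.2 r.1

/-- `N` has deficiency zero: `|V| - l - dim S_N = 0`. -/
def DeficiencyZero (N : ReactionNetwork n) : Prop :=
  N.complexes.card = N.numLinkageClasses + Module.finrank ℝ N.stoichSubspace

/-- `N` is a WR₀ network: weakly reversible and of deficiency zero. -/
def WR0 (N : ReactionNetwork n) : Prop := N.WeaklyReversible ∧ N.DeficiencyZero

/-- `(N',κ')` is a realization of `(N,κ)`: the two mass-action systems generate the
same ODE system on the positive orthant. -/
def IsRealizationOf (N' : ReactionNetwork n) (κ' : Cplx n × Cplx n → ℝ)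
    (N : ReactionNetwork n) (κ : Cplx n × Cplx n → ℝ) : Prop :=
  ∀ x : Cplx n, (∀ i, 0 < x i) → N'.massAction κ' x = N.massAction κ x

/-- `N` is realizable by `N'`: for every choice of positive rate constants `κ` for `N`
there exist positive rate constants `κ'` for `N'` generating the same ODE system. -/
def RealizableBy (N N' : ReactionNetwork n) : Prop :=
  ∀ κ : Cplx n × Cplx n → ℝ, N.PosRates κ →
    ∃ κ' : Cplx n × Cplx n → ℝ, N'.PosRates κ' ∧ IsRealizationOf N' κ' N κ

/-- `N` is WR₀-realizable: for every choice of positive rate constants `κ`,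
the mass-action system `(N,κ)` has a WR₀ realization. -/
def WR0Realizable (N : ReactionNetwork n) : Prop :=
  ∀ κ : Cplx n × Cplx n → ℝ, N.PosRates κ →
    ∃ (N' : ReactionNetwork n) (κ' : Cplx n × Cplx n → ℝ),
      N'.WR0 ∧ N'.PosRates κ' ∧ IsRealizationOf N' κ' N κ

/-- The reactions of `N` with source complex `y`. -/
def reactionsFrom (N : ReactionNetwork n) (y : Cplx n) : Finset (Cplx n × Cplx n) :=
  N.reactions.filter (fun r => r.1 = y)

/-- `Cone_N(y)`: the cone of nonnegative combinations of the reaction vectors of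
reactions of `N` with source `y`. -/
def reactionCone (N : ReactionNetwork n) (y : Cplx n) : Set (Cplx n) :=
  {w | ∃ α : Cplx n × Cplx n → ℝ, (∀ r ∈ N.reactionsFrom y, 0 ≤ α r) ∧
        w = ∑ r ∈ N.reactionsFrom y, α r • (r.2 - r.1)}

/-- The net reaction vector `w_y = ∑_{y→y'∈N} κ_{y→y'} (y' - y)` of a source complex. -/
def netVector (N : ReactionNetwork n) (κ : Cplx n × Cplx n → ℝ) (y : Cplx n) : Cplx n :=
  ∑ r ∈ N.reactionsFrom y, κ r • (r.2 - r.1)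

end ReactionNetwork
open ReactionNetwork Finset

namespace RN0

attribute [local instance] Classical.propDecidable

variable {n : ℕ}

/-- Avoid finitely many nonzero vectors: find `u` not orthogonal to any of them. -/
lemma exists_dir (F : Finset (Cplx n)) (hF : ∀ v ∈ F, v ≠ 0) :
    ∃ u : Cplx n, ∀ v ∈ F, ∑ i, v i * u i ≠ 0 := by
  classical
  induction F using Finset.induction_on with
  | empty => exact ⟨0, by simp⟩
  | insert _ _ hv0 ih =>
    rename_i v0 F
    obtain ⟨u, hu⟩ := ih (fun v hv => hF v (Finset.mem_insert_of_mem hv))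
    have hv0ne : v0 ≠ 0 := hF v0 (Finset.mem_insert_self _ _)
    have hS : (0:ℝ) < ∑ i, v0 i * v0 i := by
      have h1 : ∀ i ∈ Finset.univ, (0:ℝ) ≤ v0 i * v0 i := fun i _ => mul_self_nonneg _
      rcases Function.ne_iff.mp hv0ne with ⟨i0, hi0⟩
      exact Finset.sum_pos' h1 ⟨i0, Finset.mem_univ _, mul_self_pos.mpr hi0⟩
    set bad : Finset ℝ := (insert v0 F).image
      (fun v => -(∑ i, v i * u i) / (∑ i, v i * v0 i)) with hbad
    obtain ⟨ε, hε⟩ := Infinite.exists_notMem_finset bad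
    refine ⟨u + ε • v0, ?_⟩
    have key : ∀ v : Cplx n, ∑ i, v i * (u + ε • v0) i
        = (∑ i, v i * u i) + ε * (∑ i, v i * v0 i) := by
      intro v
      rw [Finset.mul_sum, ← Finset.sum_add_distrib]
      refine Finset.sum_congr rfl fun i _ => ?_
      simp only [Pi.add_apply, Pi.smul_apply, smul_eq_mul]; ring
    intro v hv
    rw [key v]
    intro hcontra
    by_cases hz : (∑ i, v i * v0 i) = 0
    · rw [hz, mul_zero, add_zero] at hcontra
      rcases Finset.mem_insert.mp hv with rfl | hvF
      · exact absurd hz (ne_of_gt hS)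
      · exact hu v hvF hcontra
    · have heq : ε = -(∑ i, v i * u i) / (∑ i, v i * v0 i) := by
        field_simp
        linarith
      exact hε (heq ▸ Finset.mem_image_of_mem _ hv)

/-- Linear independence of exponentials with distinct rates. -/
lemma exp_indep (S : Finset ℝ) (c : ℝ → ℝ)
    (h : ∀ s : ℝ, ∑ l ∈ S, c l * Real.exp (s * l) = 0) : ∀ l ∈ S, c l = 0 := by
  classical
  induction S using Finset.strongInduction with
  | _ S ih =>
    rcases S.eq_empty_or_nonempty with rfl | hne
    · simp
    · set m := S.max' hne with hm
      have hmS : m ∈ S := S.max'_mem hne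
      have hg : ∀ s : ℝ, ∑ l ∈ S, c l * Real.exp (s * (l - m)) = 0 := by
        intro s
        have h0 := h s
        have h2 : ∑ l ∈ S, c l * Real.exp (s * (l - m))
            = Real.exp (-(s*m)) * ∑ l ∈ S, c l * Real.exp (s * l) := by
          rw [Finset.mul_sum]
          refine Finset.sum_congr rfl fun l _ => ?_
          rw [show s * (l - m) = -(s*m) + s*l by ring, Real.exp_add]
          ring
        rw [h2, h0, mul_zero]
      have hcm : c m = 0 := by
        have htend : Filter.Tendsto (fun s => ∑ l ∈ S, c l * Real.exp (s * (l - m)))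
            Filter.atTop (nhds (∑ l ∈ S, if l = m then c m else 0)) := by
          refine tendsto_finset_sum _ fun l hl => ?_
          by_cases hlm : l = m
          · subst hlm
            simp only [if_pos rfl, sub_self, mul_zero, Real.exp_zero, mul_one]
            exact tendsto_const_nhds
          · simp only [if_neg hlm]
            have hlt : l - m < 0 := by
              have h3 := Finset.le_max' S l hl
              have : l < m := lt_of_le_of_ne h3 hlm
              linarith
            have h1 : Filter.Tendsto (fun s : ℝ => s * (l - m)) Filter.atTop Filter.atBot :=
              Filter.Tendsto.atTop_mul_const_of_neg hlt Filter.tendsto_id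
            have h2 : Filter.Tendsto (fun s : ℝ => Real.exp (s * (l-m))) Filter.atTop (nhds 0) :=
              Real.tendsto_exp_atBot.comp h1
            simpa using h2.const_mul (c l)
        have h0 : Filter.Tendsto (fun s => ∑ l ∈ S, c l * Real.exp (s * (l - m)))
            Filter.atTop (nhds 0) := by
          simp only [hg]; exact tendsto_const_nhds
        have := tendsto_nhds_unique htend h0
        rwa [Finset.sum_ite_eq' S m (fun _ => c m), if_pos hmS] at this
      have hrec : ∀ l ∈ S.erase m, c l = 0 := by
        refine ih (S.erase m) (Finset.erase_ssubset hmS) ?_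
        intro s
        have h0 := h s
        rw [← Finset.add_sum_erase S _ hmS, hcm] at h0
        simpa using h0
      intro l hl
      by_cases hlm : l = m
      · rw [hlm]; exact hcm
      · exact hrec l (Finset.mem_erase.mpr ⟨hlm, hl⟩)

/-- Monomials with distinct real exponent vectors are linearly independent on the
positive orthant (vector-coefficient version). -/
lemma monomial_indep (S : Finset (Cplx n)) (w : Cplx n → Cplx n)
    (h : ∀ x : Cplx n, (∀ i, 0 < x i) → ∑ y ∈ S, monomial x y • w y = 0) :
    ∀ y ∈ S, w y = 0 := by
  classical
  set F : Finset (Cplx n) := ((S ×ˢ S).filter (fun p => p.1 ≠ p.2)).image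
    (fun p => p.1 - p.2) with hF
  have hFne : ∀ v ∈ F, v ≠ 0 := by
    intro v hv
    rcases Finset.mem_image.mp hv with ⟨p, hp, rfl⟩
    exact sub_ne_zero_of_ne (Finset.mem_filter.mp hp).2
  obtain ⟨u, hu⟩ := exists_dir F hFne
  set ι : Cplx n → ℝ := fun y => ∑ i, y i * u i with hι
  have hinj : ∀ y ∈ S, ∀ z ∈ S, ι y = ι z → y = z := by
    intro y hy z hz hyz
    by_contra hne
    have hmem : y - z ∈ F := by
      refine Finset.mem_image.mpr ⟨(y, z), ?_, rfl⟩
      exact Finset.mem_filter.mpr ⟨Finset.mem_product.mpr ⟨hy, hz⟩, hne⟩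
    refine hu _ hmem ?_
    have : ∑ i, (y - z) i * u i = ι y - ι z := by
      simp only [hι, Pi.sub_apply, sub_mul, Finset.sum_sub_distrib]
    rw [this, hyz, sub_self]
  intro y0 hy0
  funext j
  set c : ℝ → ℝ := fun l => ∑ y ∈ S.filter (fun y => ι y = l), w y j with hc
  have hmono : ∀ (s : ℝ) (y : Cplx n),
      monomial (fun i => Real.exp (s * u i)) y = Real.exp (s * ι y) := by
    intro s y
    unfold monomial
    have h1 : ∀ i ∈ Finset.univ, Real.exp (s * u i) ^ y i = Real.exp (s * (y i * u i)) := by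
      intro i _
      rw [Real.rpow_def_of_pos (Real.exp_pos _), Real.log_exp]
      ring_nf
    rw [Finset.prod_congr rfl h1, ← Real.exp_sum]
    congr 1
    rw [hι, Finset.mul_sum]
  have hs : ∀ s : ℝ, ∑ l ∈ S.image ι, c l * Real.exp (s * l) = 0 := by
    intro s
    have happ := congrFun (h (fun i => Real.exp (s * u i)) (fun i => Real.exp_pos _)) j
    rw [Finset.sum_apply] at happ
    rw [Pi.zero_apply] at happ
    have hterm : ∀ y ∈ S, (monomial (fun i => Real.exp (s * u i)) y • w y) j
        = w y j * Real.exp (s * ι y) := by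
      intro y _
      rw [Pi.smul_apply, smul_eq_mul, hmono s y]; ring
    rw [Finset.sum_congr rfl hterm] at happ
    rw [← Finset.sum_fiberwise_of_maps_to (g := ι) (fun y hy => Finset.mem_image_of_mem ι hy)
      (f := fun y => w y j * Real.exp (s * ι y))] at happ
    rw [← happ]
    refine Finset.sum_congr rfl fun l hl => ?_
    rw [hc, Finset.sum_mul]
    refine Finset.sum_congr rfl fun y hy => ?_
    rw [(Finset.mem_filter.mp hy).2]
  have hc0 := exp_indep (S.image ι) c hs (ι y0) (Finset.mem_image_of_mem ι hy0)
  have hfilter : S.filter (fun y => ι y = ι y0) = {y0} := by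
    ext z
    simp only [Finset.mem_filter, Finset.mem_singleton]
    constructor
    · rintro ⟨hz, hze⟩; exact hinj z hz y0 hy0 hze
    · rintro rfl; exact ⟨hy0, rfl⟩
  simp only [hc] at hc0
  rw [hfilter, Finset.sum_singleton] at hc0
  exact hc0

end RN0
namespace RN0
attribute [local instance] Classical.propDecidable
variable {n : ℕ}

lemma netVector_eq_zero_of_not_source (M : ReactionNetwork n) (k : Cplx n × Cplx n → ℝ)
    {y : Cplx n} (hy : y ∉ M.sources) : M.netVector k y = 0 := by
  unfold ReactionNetwork.netVector
  have : M.reactionsFrom y = ∅ := by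
    rw [Finset.eq_empty_iff_forall_notMem]
    intro r hr
    rcases Finset.mem_filter.mp hr with ⟨hr1, hr2⟩
    exact hy (hr2 ▸ Finset.mem_image_of_mem Prod.fst hr1)
  rw [this, Finset.sum_empty]

lemma massAction_eq_sum (M : ReactionNetwork n) (k : Cplx n × Cplx n → ℝ) (x : Cplx n) :
    M.massAction k x = ∑ y ∈ M.sources, monomial x y • M.netVector k y := by
  classical
  unfold ReactionNetwork.massAction ReactionNetwork.netVector ReactionNetwork.reactionsFrom
  rw [← Finset.sum_fiberwise_of_maps_to (g := Prod.fst)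
    (fun r hr => Finset.mem_image_of_mem Prod.fst hr)]
  refine Finset.sum_congr rfl fun y hy => ?_
  rw [Finset.smul_sum]
  refine Finset.sum_congr rfl fun r hr => ?_
  have h1 : r.1 = y := (Finset.mem_filter.mp hr).2
  rw [h1, smul_smul, mul_comm]

/-- Realizations have the same net vectors everywhere. -/
lemma netVector_eq_of_real {M1 M2 : ReactionNetwork n} {k1 k2 : Cplx n × Cplx n → ℝ}
    (h : ∀ x : Cplx n, (∀ i, 0 < x i) → M1.massAction k1 x = M2.massAction k2 x) :
    ∀ y, M1.netVector k1 y = M2.netVector k2 y := by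
  classical
  set S := M1.sources ∪ M2.sources with hS
  have key : ∀ x : Cplx n, (∀ i, 0 < x i) →
      ∑ y ∈ S, monomial x y • (M1.netVector k1 y - M2.netVector k2 y) = 0 := by
    intro x hx
    have h1 : ∑ y ∈ S, monomial x y • M1.netVector k1 y = M1.massAction k1 x := by
      rw [massAction_eq_sum]
      refine (Finset.sum_subset Finset.subset_union_left ?_).symm
      intro y _ hy
      rw [netVector_eq_zero_of_not_source M1 k1 hy, smul_zero]
    have h2 : ∑ y ∈ S, monomial x y • M2.netVector k2 y = M2.massAction k2 x := by
      rw [massAction_eq_sum]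
      refine (Finset.sum_subset Finset.subset_union_right ?_).symm
      intro y _ hy
      rw [netVector_eq_zero_of_not_source M2 k2 hy, smul_zero]
    calc ∑ y ∈ S, monomial x y • (M1.netVector k1 y - M2.netVector k2 y)
        = (∑ y ∈ S, monomial x y • M1.netVector k1 y)
          - ∑ y ∈ S, monomial x y • M2.netVector k2 y := by
          rw [← Finset.sum_sub_distrib]
          exact Finset.sum_congr rfl fun y _ => smul_sub _ _ _
      _ = 0 := by rw [h1, h2, h x hx, sub_self]
  have hz := monomial_indep S _ key
  intro y
  by_cases hyS : y ∈ S
  · have := hz y hyS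
    exact sub_eq_zero.mp this
  · rw [netVector_eq_zero_of_not_source M1 k1 (fun hc => hyS (Finset.mem_union_left _ hc)),
      netVector_eq_zero_of_not_source M2 k2 (fun hc => hyS (Finset.mem_union_right _ hc))]

end RN0
namespace RN0
attribute [local instance] Classical.propDecidable
variable {n : ℕ}

lemma linked_refl (M : ReactionNetwork n) (y : Cplx n) : M.linked y y :=
  Relation.ReflTransGen.refl

lemma linked_symm (M : ReactionNetwork n) {y z : Cplx n} (h : M.linked y z) : M.linked z y := by
  refine @Std.Symm.symm _ _ (@Relation.ReflTransGen.symmetric _ _ ⟨?_⟩) _ _ h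
  intro a b hab
  exact Or.symm hab

lemma linked_trans (M : ReactionNetwork n) {x y z : Cplx n}
    (h1 : M.linked x y) (h2 : M.linked y z) : M.linked x z :=
  Relation.ReflTransGen.trans h1 h2

/-- The linkage class of `y` as a `Finset`. -/
noncomputable def clsF (M : ReactionNetwork n) (y : Cplx n) : Finset (Cplx n) :=
  M.complexes.filter (fun z => M.linked y z)

lemma mem_clsF {M : ReactionNetwork n} {y z : Cplx n} :
    z ∈ clsF M y ↔ z ∈ M.complexes ∧ M.linked y z := by
  unfold clsF; rw [Finset.mem_filter]

lemma clsF_eq_of_linked {M : ReactionNetwork n} {y z : Cplx n} (h : M.linked y z) :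
    clsF M y = clsF M z := by
  ext u
  rw [mem_clsF, mem_clsF]
  constructor
  · rintro ⟨hu, hl⟩; exact ⟨hu, linked_trans M (linked_symm M h) hl⟩
  · rintro ⟨hu, hl⟩; exact ⟨hu, linked_trans M h hl⟩

lemma mem_clsF_self {M : ReactionNetwork n} {y : Cplx n} (hy : y ∈ M.complexes) :
    y ∈ clsF M y := mem_clsF.mpr ⟨hy, linked_refl M y⟩

lemma src_mem_complexes {M : ReactionNetwork n} {r : Cplx n × Cplx n} (hr : r ∈ M.reactions) :
    r.1 ∈ M.complexes := Finset.mem_union_left _ (Finset.mem_image_of_mem Prod.fst hr)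

lemma tgt_mem_complexes {M : ReactionNetwork n} {r : Cplx n × Cplx n} (hr : r ∈ M.reactions) :
    r.2 ∈ M.complexes := Finset.mem_union_right _ (Finset.mem_image_of_mem Prod.snd hr)

lemma linked_of_edge {M : ReactionNetwork n} {r : Cplx n × Cplx n} (hr : r ∈ M.reactions) :
    M.linked r.1 r.2 :=
  Relation.ReflTransGen.single (Or.inl hr)

lemma tgt_mem_clsF {M : ReactionNetwork n} {y z : Cplx n} (hr : (y, z) ∈ M.reactions) :
    z ∈ clsF M y :=
  mem_clsF.mpr ⟨tgt_mem_complexes hr, linked_of_edge hr⟩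

/-- The set of linkage classes, as a finset of finsets. -/
noncomputable def classes (M : ReactionNetwork n) : Finset (Finset (Cplx n)) :=
  M.complexes.image (clsF M)

lemma clsF_mem_classes {M : ReactionNetwork n} {y : Cplx n} (hy : y ∈ M.complexes) :
    clsF M y ∈ classes M := by
  unfold classes; exact Finset.mem_image_of_mem _ hy

lemma classes_spec {M : ReactionNetwork n} {C : Finset (Cplx n)} (hC : C ∈ classes M) :
    ∃ y ∈ M.complexes, C = clsF M y := by
  unfold classes at hC
  rcases Finset.mem_image.mp hC with ⟨y, hy, h⟩
  exact ⟨y, hy, h.symm⟩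

lemma clsF_eq_of_mem {M : ReactionNetwork n} {y z : Cplx n} (hz : z ∈ clsF M y) :
    clsF M z = clsF M y := (clsF_eq_of_linked (mem_clsF.mp hz).2).symm

/-- membership in a class determines the class -/
lemma class_eq_clsF {M : ReactionNetwork n} {C : Finset (Cplx n)} (hC : C ∈ classes M)
    {y : Cplx n} (hy : y ∈ C) : C = clsF M y := by
  rcases classes_spec hC with ⟨z, hz, rfl⟩
  exact (clsF_eq_of_mem hy).symm

lemma clsF_subset_complexes {M : ReactionNetwork n} (y : Cplx n) :
    clsF M y ⊆ M.complexes := fun z hz => (mem_clsF.mp hz).1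

lemma card_complexes_eq_sum (M : ReactionNetwork n) :
    M.complexes.card = ∑ C ∈ classes M, C.card := by
  classical
  rw [Finset.card_eq_sum_card_fiberwise (f := clsF M) (t := classes M)
    (fun y hy => clsF_mem_classes hy)]
  refine Finset.sum_congr rfl fun C hC => ?_
  congr 1
  ext z
  rw [Finset.mem_filter]
  constructor
  · rintro ⟨hz, rfl⟩; exact mem_clsF_self hz
  · intro hz
    exact ⟨(mem_clsF.mp ((class_eq_clsF hC hz) ▸ hz)).1, (class_eq_clsF hC hz).symm⟩

lemma numLinkageClasses_eq (M : ReactionNetwork n) :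
    M.numLinkageClasses = (classes M).card := by
  unfold ReactionNetwork.numLinkageClasses
  have h1 : M.linkagePartition
      = (fun C : Finset (Cplx n) => (C : Set (Cplx n))) '' (classes M : Set (Finset (Cplx n))) := by
    ext A
    simp only [ReactionNetwork.linkagePartition, Set.mem_setOf_eq, Set.mem_image,
      Finset.mem_coe]
    constructor
    · rintro ⟨y, hy, rfl⟩
      refine ⟨clsF M y, clsF_mem_classes hy, ?_⟩
      ext z
      simp only [Finset.coe_filter, ReactionNetwork.linkageClass, Set.mem_setOf_eq, clsF]
    · rintro ⟨C, hC, rfl⟩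
      rcases classes_spec hC with ⟨y, hy, rfl⟩
      refine ⟨y, hy, ?_⟩
      ext z
      simp only [ReactionNetwork.linkageClass, Set.mem_setOf_eq, Finset.coe_filter, clsF]
  rw [h1, Set.ncard_image_of_injective _ Finset.coe_injective, Set.ncard_coe_finset]

/-- directed reachability -/
def dirReach (M : ReactionNetwork n) : Cplx n → Cplx n → Prop :=
  Relation.ReflTransGen (fun u v => (u, v) ∈ M.reactions)

lemma dirReach_of_linked {M : ReactionNetwork n} (hWR : M.WeaklyReversible)
    {y z : Cplx n} (h : M.linked y z) : dirReach M y z := by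
  induction h with
  | refl => exact Relation.ReflTransGen.refl
  | tail hab hbc ih =>
    rename_i b c
    rcases hbc with he | he
    · exact Relation.ReflTransGen.tail ih he
    · exact Relation.ReflTransGen.trans ih (hWR (c, b) he)

/-- weak reversibility: every complex has an outgoing reaction. -/
lemma exists_out {M : ReactionNetwork n} (hWR : M.WeaklyReversible)
    {y : Cplx n} (hy : y ∈ M.complexes) : ∃ z, (y, z) ∈ M.reactions := by
  rcases Finset.mem_union.mp hy with h | h
  · rcases Finset.mem_image.mp h with ⟨r, hr, rfl⟩
    exact ⟨r.2, hr⟩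
  · rcases Finset.mem_image.mp h with ⟨r, hr, rfl⟩
    have := hWR r hr
    rcases (Relation.ReflTransGen.cases_head this) with heq | ⟨c, hc, _⟩
    · exact absurd heq.symm (M.no_loops r hr)
    · exact ⟨c, hc⟩

end RN0
namespace RN0
attribute [local instance] Classical.propDecidable
variable {n : ℕ}

/-- Span of all differences of elements of a finset. -/
noncomputable def DiffSpan (C : Finset (Cplx n)) : Submodule ℝ (Cplx n) :=
  Submodule.span ℝ {d | ∃ z ∈ C, ∃ y ∈ C, d = z - y}

lemma sub_mem_diffSpan {C : Finset (Cplx n)} {z y : Cplx n} (hz : z ∈ C) (hy : y ∈ C) :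
    z - y ∈ DiffSpan C :=
  Submodule.subset_span ⟨z, hz, y, hy, rfl⟩

lemma diffSpan_eq_span_image {C : Finset (Cplx n)} {y0 : Cplx n} (hy0 : y0 ∈ C) :
    DiffSpan C = Submodule.span ℝ (((C.erase y0).image (fun z => z - y0)) : Set (Cplx n)) := by
  apply le_antisymm
  · rw [DiffSpan, Submodule.span_le]
    rintro d ⟨z, hz, y, hy, rfl⟩
    have key : ∀ u ∈ C, u - y0 ∈ Submodule.span ℝ
        (((C.erase y0).image (fun z => z - y0)) : Set (Cplx n)) := by
      intro u hu
      by_cases hu0 : u = y0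
      · rw [hu0, sub_self]; exact Submodule.zero_mem _
      · exact Submodule.subset_span (by
          simp only [Finset.coe_image, Set.mem_image, Finset.mem_coe, Finset.mem_erase]
          exact ⟨u, ⟨hu0, hu⟩, rfl⟩)
    have : z - y = (z - y0) - (y - y0) := by ring
    rw [this]
    exact Submodule.sub_mem _ (key z hz) (key y hy)
  · rw [Submodule.span_le]
    intro d hd
    simp only [Finset.coe_image, Set.mem_image, Finset.mem_coe, Finset.mem_erase] at hd
    rcases hd with ⟨z, ⟨_, hz⟩, rfl⟩
    exact sub_mem_diffSpan hz hy0

lemma finrank_diffSpan_add_one_le {C : Finset (Cplx n)} (hC : C.Nonempty) :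
    Module.finrank ℝ (DiffSpan C) + 1 ≤ C.card := by
  rcases hC with ⟨y0, hy0⟩
  rw [diffSpan_eq_span_image hy0]
  have h1 : Module.finrank ℝ (Submodule.span ℝ
      (((C.erase y0).image (fun z => z - y0)) : Set (Cplx n))) ≤ (C.erase y0).card :=
    le_trans (finrank_span_finset_le_card _) (Finset.card_image_le)
  have h2 : (C.erase y0).card = C.card - 1 := Finset.card_erase_of_mem hy0
  have h3 : 1 ≤ C.card := Finset.card_pos.mpr ⟨y0, hy0⟩
  omega

/-- ad hoc independence of a family of submodules -/
def FamIndep {ι : Type*} (s : Finset ι) (f : ι → Submodule ℝ (Cplx n)) : Prop :=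
  ∀ g : ι → Cplx n, (∀ i ∈ s, g i ∈ f i) → (∑ i ∈ s, g i) = 0 → ∀ i ∈ s, g i = 0

lemma finrank_sup_le {ι : Type*} (s : Finset ι) (f : ι → Submodule ℝ (Cplx n)) :
    Module.finrank ℝ (s.sup f : Submodule ℝ (Cplx n)) ≤ ∑ i ∈ s, Module.finrank ℝ (f i) := by
  classical
  induction s using Finset.induction_on with
  | empty => simp [Finset.sup_empty]
  | insert _ _ hni ih =>
    rename_i a s
    rw [Finset.sup_insert, Finset.sum_insert hni]
    have h := Submodule.finrank_sup_add_finrank_inf_eq (f a) (s.sup f)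
    omega

lemma famIndep_of_finrank {ι : Type*} (s : Finset ι) (f : ι → Submodule ℝ (Cplx n))
    (h : Module.finrank ℝ (s.sup f : Submodule ℝ (Cplx n)) = ∑ i ∈ s, Module.finrank ℝ (f i)) :
    FamIndep s f := by
  classical
  induction s using Finset.induction_on with
  | empty => intro g _ _ i hi; exact absurd hi (Finset.notMem_empty i)
  | insert _ _ hni ih =>
    rename_i a s
    rw [Finset.sup_insert, Finset.sum_insert hni] at h
    have hsup := Submodule.finrank_sup_add_finrank_inf_eq (f a) (s.sup f)
    have hle : Module.finrank ℝ (s.sup f : Submodule ℝ (Cplx n))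
        ≤ ∑ i ∈ s, Module.finrank ℝ (f i) := finrank_sup_le s f
    have hle2 : Module.finrank ℝ (f a ⊔ s.sup f : Submodule ℝ (Cplx n))
        ≤ Module.finrank ℝ (f a) + Module.finrank ℝ (s.sup f : Submodule ℝ (Cplx n)) := by omega
    have heq1 : Module.finrank ℝ (s.sup f : Submodule ℝ (Cplx n))
        = ∑ i ∈ s, Module.finrank ℝ (f i) := by omega
    have heq2 : Module.finrank ℝ (f a ⊓ s.sup f : Submodule ℝ (Cplx n)) = 0 := by omega
    have hbot : f a ⊓ s.sup f = ⊥ := Submodule.finrank_eq_zero.mp heq2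
    intro g hg hsum
    have hsummem : (∑ i ∈ s, g i) ∈ (s.sup f : Submodule ℝ (Cplx n)) := by
      refine Submodule.sum_mem _ fun i hi => ?_
      exact (Finset.le_sup hi : f i ≤ s.sup f) (hg i (Finset.mem_insert_of_mem hi))
    rw [Finset.sum_insert hni] at hsum
    have hga : g a ∈ f a ⊓ s.sup f := by
      constructor
      · exact hg a (Finset.mem_insert_self a s)
      · have : g a = -∑ i ∈ s, g i := by linear_combination (norm := module) hsum
        rw [this]
        exact Submodule.neg_mem _ hsummem
    have hga0 : g a = 0 := by rw [hbot] at hga; exact hga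
    have hrest := ih heq1 g (fun i hi => hg i (Finset.mem_insert_of_mem hi))
      (by rw [hga0, zero_add] at hsum; exact hsum)
    intro i hi
    rcases Finset.mem_insert.mp hi with rfl | hi'
    · exact hga0
    · exact hrest i hi'

end RN0
namespace RN0
attribute [local instance] Classical.propDecidable
variable {n : ℕ}

lemma class_nonempty {M : ReactionNetwork n} {C : Finset (Cplx n)} (hC : C ∈ classes M) :
    C.Nonempty := by
  rcases classes_spec hC with ⟨y, hy, rfl⟩
  exact ⟨y, mem_clsF_self hy⟩

lemma stoich_le_sup (M : ReactionNetwork n) :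
    M.stoichSubspace ≤ (classes M).sup DiffSpan := by
  rw [ReactionNetwork.stoichSubspace, Submodule.span_le]
  rintro d ⟨r, hr, rfl⟩
  have h1 : r.2 ∈ clsF M r.1 := by
    have : (r.1, r.2) ∈ M.reactions := by rwa [Prod.mk.eta]
    exact tgt_mem_clsF this
  have h2 : r.1 ∈ clsF M r.1 := mem_clsF_self (src_mem_complexes hr)
  have h3 : r.2 - r.1 ∈ DiffSpan (clsF M r.1) := sub_mem_diffSpan h1 h2
  exact (Finset.le_sup (clsF_mem_classes (src_mem_complexes hr)) :
    DiffSpan (clsF M r.1) ≤ (classes M).sup DiffSpan) h3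

lemma netVector_mem_diffSpan (M : ReactionNetwork n) (k : Cplx n × Cplx n → ℝ) (y : Cplx n) :
    M.netVector k y ∈ DiffSpan (clsF M y) := by
  refine Submodule.sum_mem _ fun r hr => ?_
  rcases Finset.mem_filter.mp hr with ⟨hr1, hr2⟩
  refine Submodule.smul_mem _ _ (sub_mem_diffSpan ?_ ?_)
  · subst hr2
    have : (r.1, r.2) ∈ M.reactions := by rwa [Prod.mk.eta]
    exact tgt_mem_clsF this
  · exact hr2 ▸ mem_clsF_self (src_mem_complexes hr1)

/-- Structure of deficiency zero networks: affinely independent classes with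
independent difference spans. -/
lemma defZero_structure (M : ReactionNetwork n) (hDZ : M.DeficiencyZero) :
    (∀ C ∈ classes M, Module.finrank ℝ (DiffSpan C) + 1 = C.card) ∧
    FamIndep (classes M) DiffSpan := by
  classical
  have h2 : Module.finrank ℝ M.stoichSubspace
      ≤ Module.finrank ℝ ((classes M).sup DiffSpan : Submodule ℝ (Cplx n)) :=
    Submodule.finrank_mono (stoich_le_sup M)
  have h3 := finrank_sup_le (classes M) DiffSpan
  have h4 : ∀ C ∈ classes M, Module.finrank ℝ (DiffSpan C) + 1 ≤ C.card :=
    fun C hC => finrank_diffSpan_add_one_le (class_nonempty hC)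
  have h5 : ∑ C ∈ classes M, (Module.finrank ℝ (DiffSpan C) + 1) ≤ ∑ C ∈ classes M, C.card :=
    Finset.sum_le_sum h4
  rw [Finset.sum_add_distrib, Finset.sum_const, smul_eq_mul, mul_one] at h5
  have hcard := card_complexes_eq_sum M
  have hdz : M.complexes.card = (classes M).card + Module.finrank ℝ M.stoichSubspace := by
    rw [hDZ, numLinkageClasses_eq]
  -- squeeze
  have heqsum : ∑ C ∈ classes M, Module.finrank ℝ (DiffSpan C)
      = Module.finrank ℝ M.stoichSubspace := by omega
  have heqK : Module.finrank ℝ ((classes M).sup DiffSpan : Submodule ℝ (Cplx n))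
      = ∑ C ∈ classes M, Module.finrank ℝ (DiffSpan C) := by omega
  constructor
  · have hsum2 : ∑ C ∈ classes M, (Module.finrank ℝ (DiffSpan C) + 1)
        = ∑ C ∈ classes M, C.card := by
      rw [Finset.sum_add_distrib, Finset.sum_const, smul_eq_mul, mul_one]
      omega
    exact fun C hC => (Finset.sum_eq_sum_iff_of_le h4).mp hsum2 C hC
  · exact famIndep_of_finrank _ _ heqK

/-- In a deficiency zero network, differences from a basepoint within a class are
linearly independent. -/
lemma class_diff_indep {M : ReactionNetwork n} (hDZ : M.DeficiencyZero)
    {C : Finset (Cplx n)} (hC : C ∈ classes M) {y0 : Cplx n} (hy0 : y0 ∈ C) :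
    LinearIndependent ℝ (fun z : (C.erase y0 : Finset (Cplx n)) => (z : Cplx n) - y0) := by
  rw [linearIndependent_iff_card_eq_finrank_span]
  have hrange : Set.range (fun z : (C.erase y0 : Finset (Cplx n)) => (z : Cplx n) - y0)
      = (((C.erase y0).image (fun z => z - y0)) : Set (Cplx n)) := by
    ext v
    simp only [Set.mem_range, Finset.coe_image, Set.mem_image, Finset.mem_coe, Subtype.exists]
    constructor
    · rintro ⟨z, hz, rfl⟩; exact ⟨z, hz, rfl⟩
    · rintro ⟨z, hz, rfl⟩; exact ⟨z, hz, rfl⟩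
  rw [Set.finrank, hrange]
  rw [← diffSpan_eq_span_image hy0]
  have h1 := (defZero_structure M hDZ).1 C hC
  have h2 : (C.erase y0).card = C.card - 1 := Finset.card_erase_of_mem hy0
  have h3 : Fintype.card ((C.erase y0 : Finset (Cplx n))) = (C.erase y0).card :=
    Fintype.card_coe _
  omega

end RN0
namespace RN0
attribute [local instance] Classical.propDecidable
open Matrix

/-- Stationary vectors of an irreducible finite Markov generator: existence,
positivity and uniqueness. -/
lemma markov_core {ι : Type} [Fintype ι] [Nonempty ι] (q : ι → ι → ℝ)
    (hq : ∀ a b, 0 ≤ q a b)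
    (hconn : ∀ a b : ι, Relation.ReflTransGen (fun u v => 0 < q u v) a b)
    (hout : ∀ a, ∃ b, 0 < q a b) :
    ∃ μ : ι → ℝ, (∀ a, 0 < μ a) ∧
      (∀ a, ∑ b, μ b * q b a = μ a * ∑ b, q a b) ∧
      ∀ ν : ι → ℝ, (∀ a, ∑ b, ν b * q b a = ν a * ∑ b, q a b) → ∃ c : ℝ, ν = c • μ := by
  classical
  set d : ι → ℝ := fun a => ∑ b, q a b with hd
  have hdpos : ∀ a, 0 < d a := by
    intro a
    rcases hout a with ⟨b, hb⟩
    have := Finset.single_le_sum (f := fun b => q a b) (fun c _ => hq a c) (Finset.mem_univ b)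
    simp only [hd]
    linarith
  set L : Matrix ι ι ℝ := Matrix.of (fun a b => q a b - if b = a then d a else 0) with hL
  have hmulvec : ∀ (h : ι → ℝ) (a : ι), L.mulVec h a = ∑ b, q a b * (h b - h a) := by
    intro h a
    simp only [Matrix.mulVec, dotProduct, hL, Matrix.of_apply]
    have h1 : ∀ b ∈ Finset.univ, (q a b - if b = a then d a else 0) * h b
        = q a b * h b - (if b = a then d a * h b else 0) := by
      intro b _; split <;> ring
    rw [Finset.sum_congr rfl h1, Finset.sum_sub_distrib, Finset.sum_ite_eq' Finset.univ a
      (fun b => d a * h b), if_pos (Finset.mem_univ a)]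
    have h2 : ∀ b ∈ Finset.univ, q a b * (h b - h a) = q a b * h b - q a b * h a := by
      intro b _; ring
    rw [Finset.sum_congr rfl h2, Finset.sum_sub_distrib, ← Finset.sum_mul]
  have hmulvecT : ∀ (ν : ι → ℝ) (a : ι), Lᵀ.mulVec ν a = (∑ b, ν b * q b a) - ν a * d a := by
    intro ν a
    simp only [Matrix.mulVec, dotProduct, Matrix.transpose_apply, hL, Matrix.of_apply]
    have h1 : ∀ b ∈ Finset.univ, (q b a - if a = b then d b else 0) * ν b
        = ν b * q b a - (if b = a then ν b * d b else 0) := by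
      intro b _
      by_cases hab : a = b
      · subst hab; rw [if_pos rfl, if_pos rfl]; ring
      · rw [if_neg hab, if_neg (fun hc => hab hc.symm)]; ring
    rw [Finset.sum_congr rfl h1, Finset.sum_sub_distrib, Finset.sum_ite_eq' Finset.univ a
      (fun b => ν b * d b), if_pos (Finset.mem_univ a)]
  -- the kernel of L consists of the constant vectors
  have hone : (fun _ : ι => (1:ℝ)) ∈ LinearMap.ker L.mulVecLin := by
    rw [LinearMap.mem_ker]
    funext a
    rw [Matrix.mulVecLin_apply, hmulvec]
    simp
  have hker : LinearMap.ker L.mulVecLin = Submodule.span ℝ {fun _ : ι => (1:ℝ)} := by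
    apply le_antisymm
    · intro h hh
      rw [LinearMap.mem_ker] at hh
      have hstat : ∀ a, ∑ b, q a b * (h b - h a) = 0 := by
        intro a
        have := congrFun hh a
        rw [Matrix.mulVecLin_apply, hmulvec] at this
        exact this
      obtain ⟨amax, hamax⟩ := Finite.exists_max h
      have hstep : ∀ a b, h a = h amax → 0 < q a b → h b = h amax := by
        intro a b ha hqab
        by_contra hb
        have hblt : h b < h amax := lt_of_le_of_ne (hamax b) hb
        have h1 : ∀ c ∈ Finset.univ, q a c * (h c - h a) ≤ 0 := by
          intro c _
          have : h c - h a ≤ 0 := by rw [ha]; linarith [hamax c]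
          exact mul_nonpos_of_nonneg_of_nonpos (hq a c) this
        have h2 : q a b * (h b - h a) < 0 := by
          apply mul_neg_of_pos_of_neg hqab
          rw [ha]; linarith
        have h3 : ∑ c, q a c * (h c - h a) < 0 := by
          have h4 : ∑ c, q a c * (h c - h a)
              = q a b * (h b - h a) + ∑ c ∈ Finset.univ.erase b, q a c * (h c - h a) :=
            (Finset.add_sum_erase _ _ (Finset.mem_univ b)).symm
          have h5 : ∑ c ∈ Finset.univ.erase b, q a c * (h c - h a) ≤ 0 :=
            Finset.sum_nonpos (fun c hc => h1 c (Finset.mem_univ c))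
          linarith
        rw [hstat a] at h3
        exact lt_irrefl 0 h3
      have hallmax : ∀ b, h b = h amax := by
        intro b
        have hpath := hconn amax b
        clear hstat
        induction hpath with
        | refl => rfl
        | tail hab hbc ih => exact hstep _ _ ih hbc
      have : h = (h amax) • (fun _ : ι => (1:ℝ)) := by
        funext b
        simp [hallmax b]
      rw [this]
      exact Submodule.smul_mem _ _ (Submodule.mem_span_singleton_self _)
    · rw [Submodule.span_le, Set.singleton_subset_iff]
      exact hone
  have honene : (fun _ : ι => (1:ℝ)) ≠ 0 := by
    intro hc
    have := congrFun hc (Classical.arbitrary ι)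
    simp at this
  have hkerrank : Module.finrank ℝ (LinearMap.ker L.mulVecLin) = 1 := by
    rw [hker]
    exact finrank_span_singleton honene
  have hcard : Module.finrank ℝ (ι → ℝ) = Fintype.card ι := Module.finrank_pi ℝ
  have hrn := LinearMap.finrank_range_add_finrank_ker L.mulVecLin
  have hrnT := LinearMap.finrank_range_add_finrank_ker Lᵀ.mulVecLin
  have hrankeq : Module.finrank ℝ (LinearMap.range Lᵀ.mulVecLin)
      = Module.finrank ℝ (LinearMap.range L.mulVecLin) := Matrix.rank_transpose L
  have hkerT : Module.finrank ℝ (LinearMap.ker Lᵀ.mulVecLin) = 1 := by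
    rw [hcard] at hrn hrnT
    omega
  -- a nonzero element of the kernel of the transpose
  have hkerTnebot : LinearMap.ker Lᵀ.mulVecLin ≠ ⊥ := by
    intro hc
    rw [hc, finrank_bot] at hkerT
    exact absurd hkerT (by norm_num)
  obtain ⟨μ', hμ'mem, hμ'ne⟩ := Submodule.exists_mem_ne_zero_of_ne_bot hkerTnebot
  have hμ'stat : ∀ a, ∑ b, μ' b * q b a = μ' a * d a := by
    intro a
    have := congrFun (LinearMap.mem_ker.mp hμ'mem) a
    rw [Matrix.mulVecLin_apply, hmulvecT, Pi.zero_apply] at this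
    linarith [this]
  -- absolute value is again stationary
  set μ : ι → ℝ := fun a => |μ' a| with hμ
  have habs : ∀ a, (∑ b, μ b * q b a) - μ a * d a ≥ 0 := by
    intro a
    have h1 : μ a * d a = |∑ b, μ' b * q b a| := by
      rw [hμ'stat a, abs_mul, abs_of_nonneg (le_of_lt (hdpos a))]
    have h2 : |∑ b, μ' b * q b a| ≤ ∑ b, μ b * q b a := by
      refine (Finset.abs_sum_le_sum_abs _ _).trans ?_
      refine le_of_eq (Finset.sum_congr rfl fun b _ => ?_)
      rw [abs_mul, abs_of_nonneg (hq b a)]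
    rw [h1]
    linarith
  have hsumzero : ∑ a, ((∑ b, μ b * q b a) - μ a * d a) = 0 := by
    rw [Finset.sum_sub_distrib]
    rw [Finset.sum_comm]
    have : ∀ b ∈ Finset.univ, ∑ a, μ b * q b a = μ b * d b := by
      intro b _
      rw [← Finset.mul_sum]
    rw [Finset.sum_congr rfl this]
    exact sub_self _
  have hμstat : ∀ a, ∑ b, μ b * q b a = μ a * d a := by
    intro a
    have := (Finset.sum_eq_zero_iff_of_nonneg
      (fun a _ => habs a)).mp hsumzero a (Finset.mem_univ a)
    linarith
  -- positivity by propagation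
  have hstep : ∀ a b, 0 < μ a → 0 < q a b → 0 < μ b := by
    intro a b ha hab
    have h1 : μ a * q a b ≤ ∑ c, μ c * q c b := by
      refine Finset.single_le_sum (f := fun c => μ c * q c b) ?_ (Finset.mem_univ a)
      intro c _
      exact mul_nonneg (abs_nonneg _) (hq c b)
    rw [hμstat b] at h1
    have h2 : 0 < μ a * q a b := mul_pos ha hab
    have h3 : 0 < μ b * d b := lt_of_lt_of_le h2 h1
    by_contra hb
    push_neg at hb
    have : μ b = 0 := le_antisymm hb (abs_nonneg _)
    rw [this, zero_mul] at h3
    exact lt_irrefl 0 h3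
  have hμpos : ∀ a, 0 < μ a := by
    have hex : ∃ a0, 0 < μ a0 := by
      by_contra hc
      push_neg at hc
      apply hμ'ne
      funext a
      have := hc a
      have h0 : μ a = 0 := le_antisymm this (abs_nonneg _)
      exact abs_eq_zero.mp h0
    rcases hex with ⟨a0, ha0⟩
    intro b
    have hpath := hconn a0 b
    induction hpath with
    | refl => exact ha0
    | tail hab hbc ih => exact hstep _ _ ih hbc
  -- μ is stationary; uniqueness via dimension
  have hμmem : μ ∈ LinearMap.ker Lᵀ.mulVecLin := by
    rw [LinearMap.mem_ker]
    funext a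
    rw [Matrix.mulVecLin_apply, hmulvecT, hμstat a, sub_self]
    rfl
  have hμne : μ ≠ 0 := by
    intro hc
    have := congrFun hc (Classical.arbitrary ι)
    have h2 := hμpos (Classical.arbitrary ι)
    rw [this] at h2
    exact lt_irrefl 0 h2
  have hspan : Submodule.span ℝ {μ} = LinearMap.ker Lᵀ.mulVecLin := by
    apply Submodule.eq_of_le_of_finrank_eq
    · rw [Submodule.span_le, Set.singleton_subset_iff]; exact hμmem
    · rw [hkerT, finrank_span_singleton hμne]
  refine ⟨μ, hμpos, fun a => by rw [hμstat a], ?_⟩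
  intro ν hν
  have hνmem : ν ∈ LinearMap.ker Lᵀ.mulVecLin := by
    rw [LinearMap.mem_ker]
    funext a
    rw [Matrix.mulVecLin_apply, hmulvecT, hν a]
    simp [hd]
  rw [← hspan] at hνmem
  rcases Submodule.mem_span_singleton.mp hνmem with ⟨c, hc⟩
  exact ⟨c, hc.symm⟩

end RN0
namespace RN0
attribute [local instance] Classical.propDecidable
variable {n : ℕ}

/-- rate function, zero off the reactions -/
noncomputable def rate (M : ReactionNetwork n) (k : Cplx n × Cplx n → ℝ) :
    Cplx n × Cplx n → ℝ := fun e => if e ∈ M.reactions then k e else 0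

lemma rate_nonneg {M : ReactionNetwork n} {k : Cplx n × Cplx n → ℝ} (hk : M.PosRates k)
    (e : Cplx n × Cplx n) : 0 ≤ rate M k e := by
  unfold rate
  split
  · exact le_of_lt (hk _ (by assumption))
  · rfl

lemma rate_pos {M : ReactionNetwork n} {k : Cplx n × Cplx n → ℝ} (hk : M.PosRates k)
    {e : Cplx n × Cplx n} (he : e ∈ M.reactions) : 0 < rate M k e := by
  unfold rate
  rw [if_pos he]
  exact hk _ he

lemma rate_eq_zero {M : ReactionNetwork n} {k : Cplx n × Cplx n → ℝ}
    {e : Cplx n × Cplx n} (he : e ∉ M.reactions) : rate M k e = 0 := if_neg he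

lemma netVector_eq_class_sum (M : ReactionNetwork n) (k : Cplx n × Cplx n → ℝ)
    {y : Cplx n} (hy : y ∈ M.complexes) :
    M.netVector k y = ∑ z ∈ clsF M y, rate M k (y, z) • (z - y) := by
  classical
  have hsub : (clsF M y).filter (fun z => (y, z) ∈ M.reactions) ⊆ clsF M y :=
    Finset.filter_subset _ _
  rw [← Finset.sum_subset hsub (by
    intro z hz hzn
    rw [Finset.mem_filter, not_and] at hzn
    rw [rate_eq_zero (hzn hz), zero_smul])]
  unfold ReactionNetwork.netVector ReactionNetwork.reactionsFrom
  refine Finset.sum_bij (fun r _ => r.2) ?_ ?_ ?_ ?_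
  · intro r hr
    rcases Finset.mem_filter.mp hr with ⟨hr1, hr2⟩
    rw [Finset.mem_filter]
    have heta : (r.1, r.2) ∈ M.reactions := by rwa [Prod.mk.eta]
    subst hr2
    exact ⟨tgt_mem_clsF heta, heta⟩
  · intro r hr r' hr' h2
    rcases Finset.mem_filter.mp hr with ⟨_, h1⟩
    rcases Finset.mem_filter.mp hr' with ⟨_, h1'⟩
    exact Prod.ext (h1.trans h1'.symm) h2
  · intro z hz
    rcases Finset.mem_filter.mp hz with ⟨_, hz2⟩
    exact ⟨(y, z), Finset.mem_filter.mpr ⟨hz2, rfl⟩, rfl⟩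
  · intro r hr
    rcases Finset.mem_filter.mp hr with ⟨hr1, hr2⟩
    have h5 : (y, r.2) = r := by rw [← hr2]
    rw [rate, hr2, h5, if_pos hr1]

/-- connectivity within a class, in subtype form -/
lemma class_conn {M : ReactionNetwork n} (hWR : M.WeaklyReversible)
    {C : Finset (Cplx n)} (hC : C ∈ classes M) {y z : Cplx n} (hy : y ∈ C) (hz : z ∈ C) :
    Relation.ReflTransGen
      (fun a b : {u // u ∈ C} => (a.1, b.1) ∈ M.reactions) ⟨y, hy⟩ ⟨z, hz⟩ := by
  have hyC := class_eq_clsF hC hy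
  have hlink : M.linked y z := by
    have h1 := (mem_clsF.mp (hyC ▸ hz)).2
    exact h1
  have hdir := dirReach_of_linked hWR hlink
  -- walk the path keeping membership
  have key : ∀ b, dirReach M y b → ∃ hb : b ∈ C,
      Relation.ReflTransGen (fun a b : {u // u ∈ C} => (a.1, b.1) ∈ M.reactions) ⟨y, hy⟩ ⟨b, hb⟩ := by
    intro b hb
    induction hb with
    | refl => exact ⟨hy, Relation.ReflTransGen.refl⟩
    | tail hab hbc ih =>
      rcases ih with ⟨hbmem, hchain⟩
      rename_i b' c'
      have hcC : c' ∈ C := by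
        have h1 : clsF M b' = C := (class_eq_clsF hC hbmem).symm
        have h2 : c' ∈ clsF M b' := tgt_mem_clsF hbc
        rwa [h1] at h2
      exact ⟨hcC, Relation.ReflTransGen.tail hchain hbc⟩
  rcases key z hdir with ⟨hz', hchain⟩
  exact hchain

lemma class_out {M : ReactionNetwork n} (hWR : M.WeaklyReversible)
    {C : Finset (Cplx n)} (hC : C ∈ classes M) {y : Cplx n} (hy : y ∈ C) :
    ∃ z ∈ C, (y, z) ∈ M.reactions := by
  have hyc : y ∈ M.complexes := clsF_subset_complexes _ ((class_eq_clsF hC hy) ▸ hy)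
  rcases exists_out hWR hyc with ⟨z, hz⟩
  refine ⟨z, ?_, hz⟩
  have h1 : z ∈ clsF M y := tgt_mem_clsF hz
  rwa [← class_eq_clsF hC hy] at h1

/-- The fundamental rewriting of a weighted sum of net vectors within a class. -/
lemma depend_eq (M : ReactionNetwork n) (k : Cplx n × Cplx n → ℝ)
    {C : Finset (Cplx n)} (hC : C ∈ classes M) (ν : Cplx n → ℝ) :
    ∑ y ∈ C, ν y • M.netVector k y
      = ∑ z ∈ C, ((∑ y ∈ C, ν y * rate M k (y, z)) - ν z * ∑ u ∈ C, rate M k (z, u)) • z := by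
  classical
  have hcls : ∀ y ∈ C, clsF M y = C := fun y hy => (class_eq_clsF hC hy).symm
  have hcpx : ∀ y ∈ C, y ∈ M.complexes := fun y hy =>
    clsF_subset_complexes _ ((class_eq_clsF hC hy) ▸ hy)
  have h1 : ∀ y ∈ C, ν y • M.netVector k y
      = ∑ z ∈ C, (ν y * rate M k (y, z)) • z - ∑ z ∈ C, (ν y * rate M k (y, z)) • y := by
    intro y hy
    rw [netVector_eq_class_sum M k (hcpx y hy), hcls y hy, Finset.smul_sum,
      ← Finset.sum_sub_distrib]
    refine Finset.sum_congr rfl fun z _ => ?_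
    rw [smul_smul, smul_sub]
  rw [Finset.sum_congr rfl h1, Finset.sum_sub_distrib]
  have h2 : ∑ y ∈ C, ∑ z ∈ C, (ν y * rate M k (y, z)) • z
      = ∑ z ∈ C, (∑ y ∈ C, ν y * rate M k (y, z)) • z := by
    rw [Finset.sum_comm]
    exact Finset.sum_congr rfl fun z _ => by rw [Finset.sum_smul]
  have h3 : ∑ y ∈ C, ∑ z ∈ C, (ν y * rate M k (y, z)) • y
      = ∑ y ∈ C, (ν y * ∑ u ∈ C, rate M k (y, u)) • y := by
    refine Finset.sum_congr rfl fun y _ => ?_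
    rw [Finset.mul_sum, Finset.sum_smul]
  rw [h2, h3, ← Finset.sum_sub_distrib]
  exact Finset.sum_congr rfl fun z _ => by rw [sub_smul]

lemma class_affine_coeffs {M : ReactionNetwork n} (hDZ : M.DeficiencyZero)
    {C : Finset (Cplx n)} (hC : C ∈ classes M) (c : Cplx n → ℝ)
    (hsum : ∑ z ∈ C, c z = 0) (hvec : ∑ z ∈ C, c z • z = 0) : ∀ z ∈ C, c z = 0 := by
  classical
  obtain ⟨y0, hy0⟩ := class_nonempty hC
  have hdiff : ∑ z ∈ C, c z • (z - y0) = 0 := by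
    have : ∑ z ∈ C, c z • (z - y0) = (∑ z ∈ C, c z • z) - (∑ z ∈ C, c z) • y0 := by
      rw [Finset.sum_smul, ← Finset.sum_sub_distrib]
      exact Finset.sum_congr rfl fun z _ => by rw [smul_sub]
    rw [this, hvec, hsum, zero_smul, sub_zero]
  rw [← Finset.add_sum_erase C _ hy0, sub_self, smul_zero, zero_add] at hdiff
  have herase : ∀ z ∈ C.erase y0, c z = 0 := by
    have hli := class_diff_indep hDZ hC hy0
    rw [Fintype.linearIndependent_iff] at hli
    have hconv : ∑ a : (C.erase y0 : Finset (Cplx n)), c a.1 • ((a : Cplx n) - y0) = 0 := by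
      rw [Finset.sum_coe_sort (C.erase y0) (fun z => c z • (z - y0))]
      exact hdiff
    intro z hz
    exact hli (fun a => c a.1) hconv ⟨z, hz⟩
  intro z hz
  by_cases hzy : z = y0
  · subst hzy
    rw [← Finset.add_sum_erase C _ hy0] at hsum
    rw [Finset.sum_eq_zero herase, add_zero] at hsum
    exact hsum
  · exact herase z (Finset.mem_erase.mpr ⟨hzy, hz⟩)

/-- (T1)+(T2): per-class balance vector and uniqueness of dependencies. -/
lemma class_balance {M : ReactionNetwork n} (hWR : M.WeaklyReversible)
    (hDZ : M.DeficiencyZero) {k : Cplx n × Cplx n → ℝ} (hk : M.PosRates k)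
    {C : Finset (Cplx n)} (hC : C ∈ classes M) :
    ∃ μ : Cplx n → ℝ, (∀ y ∈ C, 0 < μ y) ∧
      (∑ y ∈ C, μ y • M.netVector k y = 0) ∧
      ∀ ν : Cplx n → ℝ, (∑ y ∈ C, ν y • M.netVector k y = 0) →
        ∃ c : ℝ, ∀ y ∈ C, ν y = c * μ y := by
  classical
  obtain ⟨ybase, hybase⟩ := class_nonempty hC
  haveI : Nonempty {u // u ∈ C} := ⟨⟨ybase, hybase⟩⟩
  set q : {u // u ∈ C} → {u // u ∈ C} → ℝ := fun a b => rate M k (a.1, b.1) with hq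
  have hq0 : ∀ a b, 0 ≤ q a b := fun a b => rate_nonneg hk _
  have hconn : ∀ a b : {u // u ∈ C}, Relation.ReflTransGen (fun u v => 0 < q u v) a b := by
    intro a b
    have h1 := class_conn hWR hC a.2 b.2
    have h2 : Relation.ReflTransGen
        (fun x y : {u // u ∈ C} => (x.1, y.1) ∈ M.reactions) a b := by
      convert h1 using 2
    refine Relation.ReflTransGen.mono ?_ _ _ h2
    intro x y hxy
    exact rate_pos hk hxy
  have hout : ∀ a : {u // u ∈ C}, ∃ b, 0 < q a b := by
    intro a
    rcases class_out hWR hC a.2 with ⟨z, hz, hedge⟩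
    exact ⟨⟨z, hz⟩, rate_pos hk hedge⟩
  obtain ⟨μι, hμpos, hμstat, hμuniq⟩ := markov_core q hq0 hconn hout
  set μ : Cplx n → ℝ := fun y => if h : y ∈ C then μι ⟨y, h⟩ else 0 with hμ
  have hμval : ∀ (y : Cplx n) (h : y ∈ C), μ y = μι ⟨y, h⟩ := by
    intro y h
    simp only [hμ, dif_pos h]
  -- sums over C vs sums over the subtype
  have hsum_conv : ∀ f : Cplx n → ℝ, ∑ y ∈ C, f y = ∑ a : {u // u ∈ C}, f a.1 :=
    fun f => (Finset.sum_coe_sort C f).symm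
  have hstatC : ∀ z ∈ C, ∑ y ∈ C, μ y * rate M k (y, z) = μ z * ∑ u ∈ C, rate M k (z, u) := by
    intro z hz
    have h1 := hμstat ⟨z, hz⟩
    rw [hsum_conv (fun y => μ y * rate M k (y, z)), hsum_conv (fun u => rate M k (z, u))]
    rw [hμval z hz]
    rw [← h1]
    refine Finset.sum_congr rfl fun a _ => ?_
    rw [hμval a.1 a.2]
  refine ⟨μ, ?_, ?_, ?_⟩
  · intro y hy
    rw [hμval y hy]
    exact hμpos _
  · rw [depend_eq M k hC μ]
    refine Finset.sum_eq_zero fun z hz => ?_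
    rw [hstatC z hz, sub_self, zero_smul]
  · intro ν hν
    rw [depend_eq M k hC ν] at hν
    set cz : Cplx n → ℝ :=
      fun z => (∑ y ∈ C, ν y * rate M k (y, z)) - ν z * ∑ u ∈ C, rate M k (z, u) with hcz
    have hczsum : ∑ z ∈ C, cz z = 0 := by
      rw [hcz]
      rw [Finset.sum_sub_distrib]
      rw [Finset.sum_comm]
      have : ∀ y ∈ C, ∑ z ∈ C, ν y * rate M k (y, z) = ν y * ∑ u ∈ C, rate M k (y, u) := by
        intro y _
        rw [Finset.mul_sum]
      rw [Finset.sum_congr rfl this]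
      exact sub_self _
    have hcz0 := class_affine_coeffs hDZ hC cz hczsum hν
    have hνstat : ∀ a : {u // u ∈ C}, ∑ b, ν b.1 * q b a = ν a.1 * ∑ b, q a b := by
      intro a
      have := hcz0 a.1 a.2
      simp only [hcz] at this
      have h2 : ∑ y ∈ C, ν y * rate M k (y, a.1) = ν a.1 * ∑ u ∈ C, rate M k (a.1, u) := by
        linarith [this]
      rw [hsum_conv (fun y => ν y * rate M k (y, a.1)),
        hsum_conv (fun u => rate M k (a.1, u))] at h2
      exact h2
    obtain ⟨c, hc⟩ := hμuniq (fun a => ν a.1) hνstat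
    refine ⟨c, fun y hy => ?_⟩
    have := congrFun hc ⟨y, hy⟩
    rw [hμval y hy]
    exact this

/-- In a positive WR₀ system every complex has a nonzero net vector. -/
lemma netVector_ne_zero {M : ReactionNetwork n} (hWR : M.WeaklyReversible)
    (hDZ : M.DeficiencyZero) {k : Cplx n × Cplx n → ℝ} (hk : M.PosRates k)
    {y : Cplx n} (hy : y ∈ M.complexes) : M.netVector k y ≠ 0 := by
  classical
  intro hzero
  have hyC : y ∈ clsF M y := mem_clsF_self hy
  have hCcls : clsF M y ∈ classes M := clsF_mem_classes hy
  rw [netVector_eq_class_sum M k hy] at hzero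
  rw [← Finset.add_sum_erase _ _ hyC] at hzero
  have hyy : rate M k (y, y) = 0 := by
    refine rate_eq_zero fun hc => ?_
    exact M.no_loops (y, y) hc rfl
  rw [hyy, zero_smul, zero_add] at hzero
  have hli := class_diff_indep hDZ hCcls hyC
  rw [Fintype.linearIndependent_iff] at hli
  have hconv : ∑ a : ((clsF M y).erase y : Finset (Cplx n)),
      rate M k (y, a.1) • ((a : Cplx n) - y) = 0 := by
    rw [Finset.sum_coe_sort ((clsF M y).erase y) (fun z => rate M k (y, z) • (z - y))]
    exact hzero
  have hall := hli (fun a => rate M k (y, a.1)) hconv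
  rcases exists_out hWR hy with ⟨z, hz⟩
  have hzy : z ≠ y := fun hc => M.no_loops (y, z) hz (by rw [hc])
  have hzmem : z ∈ (clsF M y).erase y := Finset.mem_erase.mpr ⟨hzy, tgt_mem_clsF hz⟩
  have := hall ⟨z, hzmem⟩
  exact absurd this (ne_of_gt (rate_pos hk hz))

lemma sources_subset_complexes (M : ReactionNetwork n) : M.sources ⊆ M.complexes :=
  Finset.subset_union_left

lemma netVector_ne_zero_iff {M : ReactionNetwork n} (hWR : M.WeaklyReversible)
    (hDZ : M.DeficiencyZero) {k : Cplx n × Cplx n → ℝ} (hk : M.PosRates k)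
    (y : Cplx n) : M.netVector k y ≠ 0 ↔ y ∈ M.complexes := by
  constructor
  · intro hne
    by_contra hy
    exact hne (netVector_eq_zero_of_not_source M k
      (fun hc => hy (sources_subset_complexes M hc)))
  · exact fun hy => netVector_ne_zero hWR hDZ hk hy

end RN0
namespace RN0
attribute [local instance] Classical.propDecidable
variable {n : ℕ}

/-- Dual functionals for the family `z - y`, `z ∈ C.erase y`. -/
lemma exists_dual {M : ReactionNetwork n} (hDZ : M.DeficiencyZero)
    {C : Finset (Cplx n)} (hC : C ∈ classes M) {y : Cplx n} (hy : y ∈ C) :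
    ∃ φ : Cplx n → (Cplx n →ₗ[ℝ] ℝ),
      ∀ z ∈ C.erase y, ∀ z' ∈ C.erase y, φ z (z' - y) = if z' = z then 1 else 0 := by
  classical
  have li := class_diff_indep hDZ hC hy
  set b : { a // a ∈ C.erase y } → Cplx n := fun a => (a : Cplx n) - y with hb
  set W : Submodule ℝ (Cplx n) := Submodule.span ℝ (Set.range b) with hW
  set B : Module.Basis { a // a ∈ C.erase y } ℝ W := Module.Basis.span li with hB
  obtain ⟨q, hq⟩ := Submodule.exists_isCompl W
  set π : Cplx n →ₗ[ℝ] W := W.linearProjOfIsCompl q hq with hπ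
  refine ⟨fun z => if h : z ∈ C.erase y then (B.coord ⟨z, h⟩).comp π else 0, ?_⟩
  intro z hz z' hz'
  simp only [dif_pos hz]
  have hmem : z' - y ∈ W := by
    rw [hW]
    exact Submodule.subset_span ⟨⟨z', hz'⟩, rfl⟩
  have hproj : π (z' - y) = ⟨z' - y, hmem⟩ := by
    rw [hπ]
    exact Submodule.linearProjOfIsCompl_apply_left hq ⟨z' - y, hmem⟩
  rw [LinearMap.comp_apply, hproj]
  have hbasis : (⟨z' - y, hmem⟩ : W) = B ⟨z', hz'⟩ := by
    refine Subtype.ext ?_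
    rw [hB]
    exact congrArg Subtype.val (Module.Basis.span_apply li ⟨z', hz'⟩).symm
  rw [hbasis, Module.Basis.coord_apply, Module.Basis.repr_self]
  rw [Finsupp.single_apply]
  by_cases h : z' = z
  · subst h
    rw [if_pos rfl, if_pos rfl]
  · rw [if_neg (fun hc => h (congrArg Subtype.val hc)), if_neg h]

/-- Evaluating a dual functional on an expansion. -/
lemma dual_eval {C : Finset (Cplx n)} {y : Cplx n} {φ : Cplx n → (Cplx n →ₗ[ℝ] ℝ)}
    (hφ : ∀ z ∈ C.erase y, ∀ z' ∈ C.erase y, φ z (z' - y) = if z' = z then 1 else 0)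
    (a : Cplx n → ℝ) {z : Cplx n} (hz : z ∈ C.erase y) :
    φ z (∑ z' ∈ C.erase y, a z' • (z' - y)) = a z := by
  classical
  rw [map_sum]
  have h1 : ∀ z' ∈ C.erase y, φ z (a z' • (z' - y)) = if z' = z then a z' else 0 := by
    intro z' hz'
    rw [LinearMap.map_smul, smul_eq_mul, hφ z hz z' hz']
    split <;> ring
  rw [Finset.sum_congr rfl h1, Finset.sum_ite_eq' (C.erase y) z a, if_pos hz]

/-- Networks with equal reactions are equal. -/
lemma net_ext {Na Nb : ReactionNetwork n} (h : Na.reactions = Nb.reactions) : Na = Nb := by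
  cases Na; cases Nb; simp_all

end RN0
namespace RN0
attribute [local instance] Classical.propDecidable
variable {n : ℕ}

/-- `(M,k)` is a positive WR₀ realization of the net-vector family `Wf`. -/
def Rz (M : ReactionNetwork n) (k : Cplx n × Cplx n → ℝ) (Wf : Cplx n → Cplx n) : Prop :=
  M.WeaklyReversible ∧ M.DeficiencyZero ∧ M.PosRates k ∧ ∀ y, M.netVector k y = Wf y

lemma Rz.cx_iff {M : ReactionNetwork n} {k : Cplx n × Cplx n → ℝ} {Wf : Cplx n → Cplx n}
    (h : Rz M k Wf) (y : Cplx n) : y ∈ M.complexes ↔ Wf y ≠ 0 := by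
  rw [← h.2.2.2 y]
  exact (netVector_ne_zero_iff h.1 h.2.1 h.2.2.1 y).symm

lemma cx_subset {A B : Cplx n → Cplx n} {Nb Nx : ReactionNetwork n}
    {kb1 kb2 kx : Cplx n × Cplx n → ℝ} {t1 t2 t3 : ℝ} (ht : t1 ≠ t2)
    (hb1 : Rz Nb kb1 (fun y => A y + t1 • B y)) (hb2 : Rz Nb kb2 (fun y => A y + t2 • B y))
    (hx : Rz Nx kx (fun y => A y + t3 • B y)) : Nx.complexes ⊆ Nb.complexes := by
  intro y hy
  have h3 : A y + t3 • B y ≠ 0 := (hx.cx_iff y).mp hy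
  by_contra hyb
  have h1 : A y + t1 • B y = 0 := by
    have := (hb1.cx_iff y).not.mp hyb
    rwa [not_not] at this
  have h2 : A y + t2 • B y = 0 := by
    have := (hb2.cx_iff y).not.mp hyb
    rwa [not_not] at this
  have hB : (t1 - t2) • B y = 0 := by
    have : (A y + t1 • B y) - (A y + t2 • B y) = (t1 - t2) • B y := by module
    rw [← this, h1, h2, sub_zero]
  have hB0 : B y = 0 := by
    rcases smul_eq_zero.mp hB with h | h
    · exact absurd h (sub_ne_zero_of_ne ht)
    · exact h
  apply h3
  rw [hB0] at h1 ⊢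
  rw [smul_zero] at h1 ⊢
  exact h1

lemma span_mem {A B : Cplx n → Cplx n} {Nb : ReactionNetwork n}
    {kb1 kb2 : Cplx n × Cplx n → ℝ} {t1 t2 : ℝ} (ht : t1 ≠ t2)
    (hb1 : Rz Nb kb1 (fun y => A y + t1 • B y)) (hb2 : Rz Nb kb2 (fun y => A y + t2 • B y))
    (y : Cplx n) (t : ℝ) : A y + t • B y ∈ DiffSpan (clsF Nb y) := by
  have e1 : Nb.netVector kb1 y = A y + t1 • B y := hb1.2.2.2 y
  have e2 : Nb.netVector kb2 y = A y + t2 • B y := hb2.2.2.2 y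
  have h1 : A y + t1 • B y ∈ DiffSpan (clsF Nb y) := by
    rw [← e1]
    exact netVector_mem_diffSpan Nb kb1 y
  have h2 : A y + t2 • B y ∈ DiffSpan (clsF Nb y) := by
    rw [← e2]
    exact netVector_mem_diffSpan Nb kb2 y
  have hB : B y = (t1 - t2)⁻¹ • ((A y + t1 • B y) - (A y + t2 • B y)) := by
    have h3 : (A y + t1 • B y) - (A y + t2 • B y) = (t1 - t2) • B y := by module
    rw [h3, smul_smul, inv_mul_cancel₀ (sub_ne_zero_of_ne ht), one_smul]
  have hBmem : B y ∈ DiffSpan (clsF Nb y) := by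
    rw [hB]
    exact Submodule.smul_mem _ _ (Submodule.sub_mem _ h1 h2)
  have hAmem : A y ∈ DiffSpan (clsF Nb y) := by
    have h4 : A y = (A y + t1 • B y) - t1 • B y := by module
    rw [h4]
    exact Submodule.sub_mem _ h1 (Submodule.smul_mem _ _ hBmem)
  exact Submodule.add_mem _ hAmem (Submodule.smul_mem _ _ hBmem)

/-- Projection argument: every class of a positive WR₀ realization is contained in
a class of any other deficiency-zero network whose class spans capture the vectors. -/
lemma class_incl {Na : ReactionNetwork n} {ka : Cplx n × Cplx n → ℝ} {Wf : Cplx n → Cplx n}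
    (ha : Rz Na ka Wf) {Nb : ReactionNetwork n} (hDZb : Nb.DeficiencyZero)
    (hcx : Na.complexes ⊆ Nb.complexes)
    (hspan : ∀ y, Wf y ∈ DiffSpan (clsF Nb y))
    {D : Finset (Cplx n)} (hD : D ∈ classes Na) : ∃ CB ∈ classes Nb, D ⊆ CB := by
  classical
  obtain ⟨μ, hμpos, hμbal, hμuniq⟩ := class_balance ha.1 ha.2.1 ha.2.2.1 hD
  have hDsub : D ⊆ Na.complexes := by
    rcases classes_spec hD with ⟨yb, hyb, rfl⟩
    exact clsF_subset_complexes _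
  have hWbal : ∑ y ∈ D, μ y • Wf y = 0 := by
    rw [← hμbal]
    exact Finset.sum_congr rfl fun y _ => by rw [ha.2.2.2 y]
  -- group by Nb-classes
  set g : Finset (Cplx n) → Cplx n :=
    fun CB => ∑ y ∈ D.filter (fun y => clsF Nb y = CB), μ y • Wf y with hg
  have hgsum : ∑ CB ∈ classes Nb, g CB = 0 := by
    rw [hg, Finset.sum_fiberwise_of_maps_to
      (fun y hy => clsF_mem_classes (hcx (hDsub hy)))]
    exact hWbal
  have hgmem : ∀ CB ∈ classes Nb, g CB ∈ DiffSpan CB := by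
    intro CB _
    refine Submodule.sum_mem _ fun y hy => ?_
    rcases Finset.mem_filter.mp hy with ⟨hy1, hy2⟩
    refine Submodule.smul_mem _ _ ?_
    rw [← hy2]
    exact hspan y
  have hfib := (defZero_structure Nb hDZb).2 g hgmem hgsum
  obtain ⟨y0, hy0⟩ := class_nonempty hD
  set CB := clsF Nb y0 with hCB
  have hCBmem : CB ∈ classes Nb := clsF_mem_classes (hcx (hDsub hy0))
  refine ⟨CB, hCBmem, ?_⟩
  set ν : Cplx n → ℝ := fun y => if clsF Nb y = CB then μ y else 0 with hν
  have hνbal : ∑ y ∈ D, ν y • Na.netVector ka y = 0 := by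
    have h1 : ∑ y ∈ D, ν y • Wf y = g CB := by
      simp only [hg, hν, ite_smul, zero_smul]
      rw [Finset.sum_filter]
    have h2 : ∑ y ∈ D, ν y • Na.netVector ka y = ∑ y ∈ D, ν y • Wf y :=
      Finset.sum_congr rfl fun y _ => by rw [ha.2.2.2 y]
    rw [h2, h1]
    exact hfib CB hCBmem
  obtain ⟨c, hc⟩ := hμuniq ν hνbal
  have hc1 : c = 1 := by
    have h1 := hc y0 hy0
    have h2 : ν y0 = μ y0 := by rw [hν]; simp [hCB]
    have h3 := hμpos y0 hy0
    rw [h2] at h1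
    have : (c - 1) * μ y0 = 0 := by linarith
    rcases mul_eq_zero.mp this with h | h
    · linarith
    · linarith
  intro y hy
  have h1 := hc y hy
  rw [hc1, one_mul] at h1
  have h2 : ν y ≠ 0 := by
    rw [h1]
    exact ne_of_gt (hμpos y hy)
  have h3 : clsF Nb y = CB := by
    by_contra hcon
    rw [hν] at h2
    simp only [if_neg hcon] at h2
    exact h2 rfl
  rw [← h3]
  exact mem_clsF_self (hcx (hDsub hy))

lemma part_eq {Na Nb : ReactionNetwork n}
    (hcx : Na.complexes = Nb.complexes)
    (hab : ∀ D ∈ classes Na, ∃ C ∈ classes Nb, D ⊆ C)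
    (hba : ∀ C ∈ classes Nb, ∃ D ∈ classes Na, C ⊆ D)
    {y : Cplx n} (hy : y ∈ Na.complexes) : clsF Na y = clsF Nb y := by
  have hDmem : clsF Na y ∈ classes Na := clsF_mem_classes hy
  obtain ⟨C, hCmem, hDC⟩ := hab _ hDmem
  have hyC : y ∈ C := hDC (mem_clsF_self hy)
  have hCeq : C = clsF Nb y := class_eq_clsF hCmem hyC
  obtain ⟨D', hD'mem, hCD'⟩ := hba _ hCmem
  have hyD' : y ∈ D' := hCD' hyC
  have hD'eq : D' = clsF Na y := class_eq_clsF hD'mem hyD'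
  rw [← hCeq]
  exact Finset.Subset.antisymm hDC (hD'eq ▸ hCD')

lemma clsF_subset_of_incl {Na Nb : ReactionNetwork n}
    (hcx : Na.complexes ⊆ Nb.complexes)
    (hab : ∀ D ∈ classes Na, ∃ C ∈ classes Nb, D ⊆ C)
    {y : Cplx n} (hy : y ∈ Na.complexes) : clsF Na y ⊆ clsF Nb y := by
  obtain ⟨C, hCmem, hDC⟩ := hab _ (clsF_mem_classes hy)
  have hyC : y ∈ C := hDC (mem_clsF_self hy)
  rw [← class_eq_clsF hCmem hyC]
  exact hDC

/-- Expansion of one's own net vector over the erased class. -/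
lemma expand_self {Nb : ReactionNetwork n} {kb : Cplx n × Cplx n → ℝ} {Wf : Cplx n → Cplx n}
    (hb : Rz Nb kb Wf) {y : Cplx n} (hy : y ∈ Nb.complexes) :
    Wf y = ∑ z ∈ (clsF Nb y).erase y, rate Nb kb (y, z) • (z - y) := by
  rw [← hb.2.2.2 y, netVector_eq_class_sum Nb kb hy,
    ← Finset.add_sum_erase _ _ (mem_clsF_self hy)]
  have h1 : rate Nb kb (y, y) = 0 :=
    rate_eq_zero (fun hc => Nb.no_loops (y, y) hc rfl)
  rw [h1, zero_smul, zero_add]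

/-- Expansion of another realization's net vector over a containing class. -/
lemma expand_sub {Na : ReactionNetwork n} {ka : Cplx n × Cplx n → ℝ} {Wf : Cplx n → Cplx n}
    (ha : Rz Na ka Wf) {Nb : ReactionNetwork n}
    (hsub : ∀ y ∈ Na.complexes, clsF Na y ⊆ clsF Nb y) (y : Cplx n) :
    Wf y = ∑ z ∈ (clsF Nb y).erase y, rate Na ka (y, z) • (z - y) := by
  classical
  have hnores : ∀ z, (y, z) ∉ Na.reactions → rate Na ka (y, z) • (z - y) = 0 :=
    fun z hz => by rw [rate_eq_zero hz, zero_smul]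
  by_cases hy : y ∈ Na.complexes
  · rw [← ha.2.2.2 y, netVector_eq_class_sum Na ka hy,
      ← Finset.add_sum_erase _ _ (mem_clsF_self hy)]
    have h1 : rate Na ka (y, y) = 0 :=
      rate_eq_zero (fun hc => Na.no_loops (y, y) hc rfl)
    rw [h1, zero_smul, zero_add]
    refine Finset.sum_subset ?_ ?_
    · intro z hz
      rcases Finset.mem_erase.mp hz with ⟨hz1, hz2⟩
      exact Finset.mem_erase.mpr ⟨hz1, hsub y hy hz2⟩
    · intro z _ hz
      refine hnores z fun hc => hz ?_
      exact Finset.mem_erase.mpr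
        ⟨fun he => Na.no_loops (y, z) hc (he ▸ rfl), tgt_mem_clsF hc⟩
  · have h0 : Wf y = 0 := by
      rw [← ha.2.2.2 y]
      exact netVector_eq_zero_of_not_source Na ka
        (fun hc => hy (sources_subset_complexes Na hc))
    rw [h0]
    refine (Finset.sum_eq_zero fun z _ => ?_).symm
    refine hnores z fun hc => hy (src_mem_complexes hc)

end RN0
namespace RN0
attribute [local instance] Classical.propDecidable
variable {n : ℕ}

/-- The central comparison lemma: a WR₀ realization at one parameter agrees with a
WR₀ network realizing at two parameters on the opposite side. -/
lemma CL {A B : Cplx n → Cplx n} {ts t1 t2 s1 s2 : ℝ}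
    {Na Nb Nc : ReactionNetwork n}
    {ka kb1 kb2 kc1 kc2 : Cplx n × Cplx n → ℝ}
    (ha : Rz Na ka (fun y => A y + ts • B y))
    (hb1 : Rz Nb kb1 (fun y => A y + t1 • B y))
    (hb2 : Rz Nb kb2 (fun y => A y + t2 • B y))
    (hc1 : Rz Nc kc1 (fun y => A y + s1 • B y))
    (hc2 : Rz Nc kc2 (fun y => A y + s2 • B y))
    (ht12 : t1 ≠ t2) (hs12 : s1 ≠ s2)
    (hside : (s1 - ts) * (t1 - ts) < 0) : Na = Nb := by
  classical
  have hcxab : Na.complexes ⊆ Nb.complexes := cx_subset ht12 hb1 hb2 ha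
  have hcxbc : Nb.complexes ⊆ Nc.complexes := cx_subset hs12 hc1 hc2 hb1
  have hcxcb : Nc.complexes ⊆ Nb.complexes := cx_subset ht12 hb1 hb2 hc1
  have hab : ∀ D ∈ classes Na, ∃ C ∈ classes Nb, D ⊆ C := fun D hD =>
    class_incl ha hb1.2.1 hcxab (fun y => span_mem ht12 hb1 hb2 y ts) hD
  have hbc : ∀ C ∈ classes Nb, ∃ C' ∈ classes Nc, C ⊆ C' := fun C hC =>
    class_incl hb1 hc1.2.1 hcxbc (fun y => span_mem hs12 hc1 hc2 y t1) hC
  have hcb : ∀ C ∈ classes Nc, ∃ C' ∈ classes Nb, C ⊆ C' := fun C hC =>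
    class_incl hc1 hb1.2.1 hcxcb (fun y => span_mem ht12 hb1 hb2 y s1) hC
  have hcxeq : Nb.complexes = Nc.complexes := Finset.Subset.antisymm hcxbc hcxcb
  have hpart : ∀ y ∈ Nb.complexes, clsF Nb y = clsF Nc y := fun y hy =>
    part_eq hcxeq hbc hcb hy
  have hsubab : ∀ y ∈ Na.complexes, clsF Na y ⊆ clsF Nb y :=
    fun y hy => clsF_subset_of_incl hcxab hab hy
  have key : ∀ y z', y ∈ Nb.complexes → z' ∈ (clsF Nb y).erase y →
      ((y, z') ∈ Na.reactions ↔ (y, z') ∈ Nb.reactions) := by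
    intro y z' hy hz'
    have hyC : y ∈ clsF Nb y := mem_clsF_self hy
    have hCmem := clsF_mem_classes hy
    obtain ⟨φ, hφ⟩ := exists_dual hb1.2.1 hCmem hyC
    set p := φ z' (A y) with hp
    set q := φ z' (B y) with hq
    have hval : ∀ t : ℝ, φ z' (A y + t • B y) = p + t * q := by
      intro t
      rw [map_add, map_smul, smul_eq_mul]
    have hts : p + ts * q = rate Na ka (y, z') := by
      have he' : A y + ts • B y
          = ∑ z ∈ (clsF Nb y).erase y, rate Na ka (y, z) • (z - y) :=
        expand_sub ha hsubab y
      rw [← hval ts, he']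
      exact dual_eval hφ (fun z => rate Na ka (y, z)) hz'
    have ht1e : p + t1 * q = rate Nb kb1 (y, z') := by
      have he' : A y + t1 • B y
          = ∑ z ∈ (clsF Nb y).erase y, rate Nb kb1 (y, z) • (z - y) :=
        expand_self hb1 hy
      rw [← hval t1, he']
      exact dual_eval hφ (fun z => rate Nb kb1 (y, z)) hz'
    have ht2e : p + t2 * q = rate Nb kb2 (y, z') := by
      have he' : A y + t2 • B y
          = ∑ z ∈ (clsF Nb y).erase y, rate Nb kb2 (y, z) • (z - y) :=
        expand_self hb2 hy
      rw [← hval t2, he']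
      exact dual_eval hφ (fun z => rate Nb kb2 (y, z)) hz'
    have hs1e : p + s1 * q = rate Nc kc1 (y, z') := by
      have hyc : y ∈ Nc.complexes := hcxbc hy
      have he' : A y + s1 • B y
          = ∑ z ∈ (clsF Nc y).erase y, rate Nc kc1 (y, z) • (z - y) :=
        expand_self hc1 hyc
      rw [← hval s1, he', ← hpart y hy]
      exact dual_eval hφ (fun z => rate Nc kc1 (y, z)) hz'
    constructor
    · intro hNa
      by_contra hNb
      have h1 : rate Nb kb1 (y, z') = 0 := rate_eq_zero hNb
      have h2 : rate Nb kb2 (y, z') = 0 := rate_eq_zero hNb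
      rw [h1] at ht1e
      rw [h2] at ht2e
      have hq0 : q = 0 := by
        have h3 : (t1 - t2) * q = 0 := by linarith
        rcases mul_eq_zero.mp h3 with h | h
        · exact absurd (by linarith : t1 = t2) ht12
        · exact h
      have hp0 : p = 0 := by
        rw [hq0] at ht1e
        linarith
      have h4 : rate Na ka (y, z') = 0 := by
        rw [← hts, hq0, hp0]
        ring
      exact absurd h4 (ne_of_gt (rate_pos ha.2.2.1 hNa))
    · intro hNb
      by_contra hNa
      have h0 : p + ts * q = 0 := by
        rw [hts]
        exact rate_eq_zero hNa
      have h1 : 0 < p + t1 * q := by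
        rw [ht1e]
        exact rate_pos hb1.2.2.1 hNb
      have h2 : 0 ≤ p + s1 * q := by
        rw [hs1e]
        exact rate_nonneg hc1.2.2.1 _
      have hA : 0 < q * (t1 - ts) := by nlinarith
      have hB2 : 0 ≤ q * (s1 - ts) := by nlinarith
      have h3 : 0 ≤ (q * (t1 - ts)) * (q * (s1 - ts)) := mul_nonneg hA.le hB2
      have h4 : (q * (t1 - ts)) * (q * (s1 - ts)) = q ^ 2 * ((s1 - ts) * (t1 - ts)) := by
        ring
      have h5 : q ^ 2 * ((s1 - ts) * (t1 - ts)) ≤ 0 :=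
        mul_nonpos_of_nonneg_of_nonpos (sq_nonneg q) (le_of_lt hside)
      have h6 : q ^ 2 * ((s1 - ts) * (t1 - ts)) = 0 := le_antisymm h5 (h4 ▸ h3)
      have hq0 : q = 0 := by
        rcases mul_eq_zero.mp h6 with h | h
        · exact pow_eq_zero_iff (two_ne_zero) |>.mp h
        · exact absurd h (ne_of_lt hside)
      rw [hq0, zero_mul] at hA
      exact lt_irrefl 0 hA
  refine net_ext (Finset.ext fun e => ?_)
  constructor
  · intro he
    have heta : (e.1, e.2) ∈ Na.reactions := by rwa [Prod.mk.eta]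
    have hsrcA : e.1 ∈ Na.complexes := src_mem_complexes he
    have hy : e.1 ∈ Nb.complexes := hcxab hsrcA
    have hz' : e.2 ∈ (clsF Nb e.1).erase e.1 :=
      Finset.mem_erase.mpr ⟨(Na.no_loops e he).symm, hsubab e.1 hsrcA (tgt_mem_clsF heta)⟩
    have h7 := (key e.1 e.2 hy hz').mp heta
    rwa [Prod.mk.eta] at h7
  · intro he
    have heta : (e.1, e.2) ∈ Nb.reactions := by rwa [Prod.mk.eta]
    have hy : e.1 ∈ Nb.complexes := src_mem_complexes he
    have hz' : e.2 ∈ (clsF Nb e.1).erase e.1 :=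
      Finset.mem_erase.mpr ⟨(Nb.no_loops e he).symm, tgt_mem_clsF heta⟩
    have h7 := (key e.1 e.2 hy hz').mpr heta
    rwa [Prod.mk.eta] at h7

end RN0
namespace RN0
attribute [local instance] Classical.propDecidable
variable {n : ℕ}

lemma netVector_combo (M : ReactionNetwork n) (ka kb : Cplx n × Cplx n → ℝ) (α β : ℝ)
    (y : Cplx n) :
    M.netVector (fun e => α * ka e + β * kb e) y
      = α • M.netVector ka y + β • M.netVector kb y := by
  unfold ReactionNetwork.netVector
  rw [Finset.smul_sum, Finset.smul_sum, ← Finset.sum_add_distrib]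
  refine Finset.sum_congr rfl fun r _ => ?_
  rw [add_smul, smul_smul, smul_smul]

lemma netVector_affine (N : ReactionNetwork n) (κ0 κ1 : Cplx n × Cplx n → ℝ) (t : ℝ)
    (y : Cplx n) :
    N.netVector (fun e => κ0 e + t * (κ1 e - κ0 e)) y
      = N.netVector κ0 y + t • N.netVector (fun e => κ1 e - κ0 e) y := by
  have h := netVector_combo N κ0 (fun e => κ1 e - κ0 e) 1 t y
  have h2 : (fun e => (1:ℝ) * κ0 e + t * (κ1 e - κ0 e))
      = (fun e => κ0 e + t * (κ1 e - κ0 e)) := by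
    funext e; ring
  rw [h2] at h
  rw [h, one_smul]

lemma toRz {N M : ReactionNetwork n} {κ k : Cplx n × Cplx n → ℝ} {t : ℝ}
    {κ0 κ1 : Cplx n × Cplx n → ℝ}
    (hκ : κ = fun e => κ0 e + t * (κ1 e - κ0 e))
    (hWR0 : M.WR0) (hpos : M.PosRates k)
    (hreal : ReactionNetwork.IsRealizationOf M k N κ) :
    Rz M k (fun y => N.netVector κ0 y + t • N.netVector (fun e => κ1 e - κ0 e) y) := by
  refine ⟨hWR0.1, hWR0.2, hpos, fun y => ?_⟩
  have h1 := netVector_eq_of_real hreal y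
  rw [h1, hκ, netVector_affine]

lemma cx_sub_sources {N M : ReactionNetwork n} {k κ : Cplx n × Cplx n → ℝ}
    (hWR : M.WeaklyReversible) (hDZ : M.DeficiencyZero) (hk : M.PosRates k)
    (heq : ∀ y, M.netVector k y = N.netVector κ y) :
    M.complexes ⊆ N.sources := by
  intro y hy
  have h1 := netVector_ne_zero hWR hDZ hk hy
  rw [heq y] at h1
  by_contra hns
  exact h1 (netVector_eq_zero_of_not_source N κ hns)

lemma pos_interval {N : ReactionNetwork n} {κ0 κ1 : Cplx n × Cplx n → ℝ}
    (h0 : N.PosRates κ0) (h1 : N.PosRates κ1) :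
    ∃ ε0 : ℝ, 0 < ε0 ∧ ∀ t : ℝ, -ε0 ≤ t → t ≤ 1 + ε0 →
      N.PosRates (fun e => κ0 e + t * (κ1 e - κ0 e)) := by
  classical
  rcases N.reactions.eq_empty_or_nonempty with hemp | hne
  · exact ⟨1, one_pos, fun t _ _ r hr => absurd hr (by rw [hemp]; exact Finset.notMem_empty r)⟩
  · set S := N.reactions.image (fun r => min (κ0 r) (κ1 r)) with hS
    set T := N.reactions.image (fun r => |κ1 r - κ0 r|) with hT
    have hSne : S.Nonempty := hne.image _
    have hTne : T.Nonempty := hne.image _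
    obtain ⟨m, hmpos, hmle⟩ : ∃ m : ℝ, 0 < m ∧ ∀ r ∈ N.reactions, m ≤ κ0 r ∧ m ≤ κ1 r := by
      refine ⟨S.min' hSne, ?_, ?_⟩
      · have hmem := S.min'_mem hSne
        rcases Finset.mem_image.mp hmem with ⟨r, hr, hrm⟩
        exact hrm ▸ lt_min (h0 r hr) (h1 r hr)
      · intro r hr
        have h2 : min (κ0 r) (κ1 r) ∈ S := Finset.mem_image_of_mem _ hr
        constructor
        · exact le_trans (S.min'_le _ h2) (min_le_left _ _)
        · exact le_trans (S.min'_le _ h2) (min_le_right _ _)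
    obtain ⟨Mx, hMx0, hMxle⟩ : ∃ Mx : ℝ, 0 ≤ Mx ∧ ∀ r ∈ N.reactions, |κ1 r - κ0 r| ≤ Mx := by
      refine ⟨T.max' hTne, ?_, ?_⟩
      · obtain ⟨r0, hr0⟩ := hne
        exact le_trans (abs_nonneg _) (T.le_max' _ (Finset.mem_image_of_mem _ hr0))
      · intro r hr
        exact T.le_max' _ (Finset.mem_image_of_mem _ hr)
    set ε0 := m / (2 * (Mx + 1)) with hε0
    have hε0pos : 0 < ε0 := by
      rw [hε0]
      positivity
    have hεM : ε0 * (Mx + 1) = m / 2 := by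
      rw [hε0]
      field_simp
    refine ⟨ε0, hε0pos, fun t htl htr r hr => ?_⟩
    obtain ⟨hma, hmb⟩ := hmle r hr
    have hdM : |κ1 r - κ0 r| ≤ Mx := hMxle r hr
    rcases abs_le.mp hdM with ⟨hd1, hd2⟩
    show 0 < κ0 r + t * (κ1 r - κ0 r)
    rcases le_total t 0 with ht0 | ht0
    · nlinarith [mul_nonneg (by linarith : (0:ℝ) ≤ -t)
        (by linarith : (0:ℝ) ≤ Mx - (κ1 r - κ0 r)),
        mul_nonneg (by linarith : (0:ℝ) ≤ -t)
        (by linarith : (0:ℝ) ≤ Mx + (κ1 r - κ0 r))]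
    · rcases le_total t 1 with ht1 | ht1
      · nlinarith [mul_nonneg (by linarith : (0:ℝ) ≤ 1 - t) (by linarith : (0:ℝ) ≤ κ0 r - m),
          mul_nonneg ht0 (by linarith : (0:ℝ) ≤ κ1 r - m)]
      · nlinarith [mul_nonneg (by linarith : (0:ℝ) ≤ t - 1)
          (by linarith : (0:ℝ) ≤ Mx - (κ1 r - κ0 r)),
          mul_nonneg (by linarith : (0:ℝ) ≤ t - 1)
          (by linarith : (0:ℝ) ≤ Mx + (κ1 r - κ0 r))]

/-- Convexity: a network realizing at two parameters realizes at all intermediate ones. -/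
lemma Rz_convex {M : ReactionNetwork n} {A B : Cplx n → Cplx n}
    {ka kb : Cplx n × Cplx n → ℝ} {a b t : ℝ}
    (hRa : Rz M ka (fun y => A y + a • B y)) (hRb : Rz M kb (fun y => A y + b • B y))
    (hat : a ≤ t) (htb : t ≤ b) (hab : a < b) :
    ∃ k, Rz M k (fun y => A y + t • B y) := by
  set l := (t - a) / (b - a) with hl
  have hba : b - a ≠ 0 := ne_of_gt (by linarith)
  have hl0 : 0 ≤ l := div_nonneg (by linarith) (by linarith)
  have hl1 : l ≤ 1 := by
    rw [hl, div_le_one (by linarith : 0 < b - a)]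
    linarith
  have hcombo : (1 - l) * a + l * b = t := by
    rw [hl]
    field_simp
    ring
  set k : Cplx n × Cplx n → ℝ := fun e => (1 - l) * ka e + l * kb e with hk
  have hkpos : M.PosRates k := by
    intro r hr
    have h1 := hRa.2.2.1 r hr
    have h2 := hRb.2.2.1 r hr
    simp only [hk]
    rcases le_total (ka r) (kb r) with hc | hc
    · nlinarith [mul_nonneg hl0 (sub_nonneg.mpr hc)]
    · nlinarith [mul_nonneg (by linarith : (0:ℝ) ≤ 1 - l) (sub_nonneg.mpr hc)]
  refine ⟨k, hRa.1, hRa.2.1, hkpos, fun y => ?_⟩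
  have h3 := netVector_combo M ka kb (1 - l) l y
  have h4 : M.netVector k y = (1 - l) • M.netVector ka y + l • M.netVector kb y := by
    rw [hk]
    exact h3
  have h5 : M.netVector ka y = A y + a • B y := hRa.2.2.2 y
  have h6 : M.netVector kb y = A y + b • B y := hRb.2.2.2 y
  rw [h4, h5, h6]
  have h7 : (1 - l) • (A y + a • B y) + l • (A y + b • B y)
      = ((1 - l) + l) • A y + ((1 - l) * a + l * b) • B y := by module
  rw [h7, hcombo]
  have h8 : (1 - l) + l = 1 := by ring
  rw [h8, one_smul]

/-- Pigeonhole: some network realizes at two distinct parameters of an infinite set. -/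
lemma pigeon {N : ReactionNetwork n} (h : N.WR0Realizable)
    {κ0 κ1 : Cplx n × Cplx n → ℝ}
    {I : Set ℝ} (hI : I.Infinite)
    (hpos : ∀ t ∈ I, N.PosRates (fun e => κ0 e + t * (κ1 e - κ0 e))) :
    ∃ (M : ReactionNetwork n) (t t' : ℝ) (k k' : Cplx n × Cplx n → ℝ),
      t ∈ I ∧ t' ∈ I ∧ t ≠ t' ∧
      Rz M k (fun y => N.netVector κ0 y + t • N.netVector (fun e => κ1 e - κ0 e) y) ∧
      Rz M k' (fun y => N.netVector κ0 y + t' • N.netVector (fun e => κ1 e - κ0 e) y) := by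
  classical
  have hQ : ∀ t ∈ I, ∃ Mk : ReactionNetwork n × (Cplx n × Cplx n → ℝ),
      Rz Mk.1 Mk.2 (fun y => N.netVector κ0 y
        + t • N.netVector (fun e => κ1 e - κ0 e) y) := by
    intro t ht
    obtain ⟨M', k', hWR0, hpos', hreal⟩ := h _ (hpos t ht)
    exact ⟨(M', k'), toRz rfl hWR0 hpos' hreal⟩
  set f : ℝ → ReactionNetwork n × (Cplx n × Cplx n → ℝ) := fun t =>
    if ht : t ∈ I then (hQ t ht).choose
    else (⟨∅, fun r hr => absurd hr (Finset.notMem_empty r)⟩, fun _ => 0) with hf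
  have hfspec : ∀ t (ht : t ∈ I), Rz (f t).1 (f t).2
      (fun y => N.netVector κ0 y + t • N.netVector (fun e => κ1 e - κ0 e) y) := by
    intro t ht
    rw [hf]
    simp only [dif_pos ht]
    exact (hQ t ht).choose_spec
  have hmaps : Set.MapsTo (fun t => (f t).1.reactions) I
      ↑((N.sources ×ˢ N.sources).powerset) := by
    intro t ht
    have hR := hfspec t ht
    have hcx : (f t).1.complexes ⊆ N.sources := by
      refine cx_sub_sources (κ := fun e => κ0 e + t * (κ1 e - κ0 e)) hR.1 hR.2.1 hR.2.2.1
        (fun y => ?_)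
      rw [hR.2.2.2 y]
      exact (netVector_affine N κ0 κ1 t y).symm
    rw [Finset.mem_coe, Finset.mem_powerset]
    intro e he
    rw [Finset.mem_product]
    exact ⟨hcx (src_mem_complexes he), hcx (tgt_mem_complexes he)⟩
  obtain ⟨t, ht, t', ht', hne, heq⟩ :=
    hI.exists_ne_map_eq_of_mapsTo hmaps (Finset.finite_toSet _)
  have hMeq : (f t').1 = (f t).1 := net_ext heq.symm
  refine ⟨(f t).1, t, t', (f t).2, (f t').2, ht, ht', hne, hfspec t ht, ?_⟩
  rw [← hMeq]
  exact hfspec t' ht'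

end RN0
namespace RN0
attribute [local instance] Classical.propDecidable
variable {n : ℕ}

/-- Master uniqueness: any two positive WR₀ realizations of `(N,κ0)` and `(N,κ1)`
have the same underlying network. -/
lemma master {N : ReactionNetwork n} (h : N.WR0Realizable)
    {κ0 κ1 : Cplx n × Cplx n → ℝ} (h0 : N.PosRates κ0) (h1 : N.PosRates κ1)
    {M0 M1 : ReactionNetwork n} {k0 k1 : Cplx n × Cplx n → ℝ}
    (hW0 : M0.WR0) (hp0 : M0.PosRates k0) (hr0 : ReactionNetwork.IsRealizationOf M0 k0 N κ0)
    (hW1 : M1.WR0) (hp1 : M1.PosRates k1) (hr1 : ReactionNetwork.IsRealizationOf M1 k1 N κ1) :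
    M0 = M1 := by
  classical
  obtain ⟨ε0, hε0pos, hεpos⟩ := pos_interval h0 h1
  have hRz0 : Rz M0 k0 (fun y => N.netVector κ0 y
      + (0:ℝ) • N.netVector (fun e => κ1 e - κ0 e) y) := by
    refine toRz ?_ hW0 hp0 hr0
    funext e; ring
  have hRz1 : Rz M1 k1 (fun y => N.netVector κ0 y
      + (1:ℝ) • N.netVector (fun e => κ1 e - κ0 e) y) := by
    refine toRz ?_ hW1 hp1 hr1
    funext e; ring
  by_contra hne
  set U0 : Set ℝ := {t | (0 ≤ t ∧ t ≤ 1) ∧ ∃ k, Rz M0 k (fun y => N.netVector κ0 y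
      + t • N.netVector (fun e => κ1 e - κ0 e) y)} with hU0
  have h0U : (0:ℝ) ∈ U0 := ⟨⟨le_refl 0, zero_le_one⟩, k0, hRz0⟩
  have hbdd : BddAbove U0 := ⟨1, fun t ht => ht.1.2⟩
  set ts := sSup U0 with hts
  have hts0 : 0 ≤ ts := le_csSup hbdd h0U
  have hts1 : ts ≤ 1 := csSup_le ⟨0, h0U⟩ (fun t ht => ht.1.2)
  have hlow : ∀ t, 0 ≤ t → t < ts → ∃ k, Rz M0 k (fun y => N.netVector κ0 y
      + t • N.netVector (fun e => κ1 e - κ0 e) y) := by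
    intro t ht0 htts
    obtain ⟨u, huU, htu⟩ := exists_lt_of_lt_csSup ⟨0, h0U⟩ htts
    obtain ⟨ku, hku⟩ := huU.2
    exact Rz_convex hRz0 hku ht0 (le_of_lt htu) (lt_of_le_of_lt ht0 htu)
  -- helper for realizations provided by WR0-realizability
  have hreal : ∀ t : ℝ, -ε0 ≤ t → t ≤ 1 + ε0 → ∃ (M : ReactionNetwork n)
      (k : Cplx n × Cplx n → ℝ), Rz M k (fun y => N.netVector κ0 y
        + t • N.netVector (fun e => κ1 e - κ0 e) y) := by
    intro t htl htr
    obtain ⟨M, k, hW, hp, hr⟩ := h _ (hεpos t htl htr)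
    exact ⟨M, k, toRz rfl hW hp hr⟩
  have hpigeon : ∀ I : Set ℝ, I.Infinite → (∀ t ∈ I, -ε0 ≤ t ∧ t ≤ 1 + ε0) →
      ∃ (M : ReactionNetwork n) (t t' : ℝ) (k k' : Cplx n × Cplx n → ℝ),
        t ∈ I ∧ t' ∈ I ∧ t ≠ t' ∧
        Rz M k (fun y => N.netVector κ0 y + t • N.netVector (fun e => κ1 e - κ0 e) y) ∧
        Rz M k' (fun y => N.netVector κ0 y + t' • N.netVector (fun e => κ1 e - κ0 e) y) := by
    intro I hI hIsub
    exact pigeon h hI (fun t ht => hεpos t (hIsub t ht).1 (hIsub t ht).2)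
  by_cases hPts : ∃ k, Rz M0 k (fun y => N.netVector κ0 y
      + ts • N.netVector (fun e => κ1 e - κ0 e) y)
  · by_cases hts1' : ts = 1
    · -- boundary at 1 : compare M1 with M0
      rw [hts1'] at hPts
      obtain ⟨kP, hkP⟩ := hPts
      obtain ⟨Nc, s1, s2, kc1, kc2, hs1I, hs2I, hs12, hRc1, hRc2⟩ :=
        hpigeon (Set.Ioo 1 (1 + ε0)) (Set.Ioo_infinite (by linarith))
          (fun t ht => ⟨by rcases ht with ⟨h1', h2'⟩; linarith,
            by rcases ht with ⟨h1', h2'⟩; linarith⟩)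
      have hcl := CL hRz1 hRz0 hkP hRc1 hRc2 (by norm_num : (0:ℝ) ≠ 1) hs12
        (by rcases hs1I with ⟨ha', hb'⟩; nlinarith)
      exact hne hcl.symm
    · -- interior boundary point, right side not M0
      have htslt : ts < 1 := lt_of_le_of_ne hts1 hts1'
      obtain ⟨kP, hkP⟩ := hPts
      obtain ⟨Nb, t1, t2, kb1, kb2, ht1I, ht2I, ht12, hRb1, hRb2⟩ :=
        hpigeon (Set.Ioc ts 1) (Set.Ioc_infinite htslt)
          (fun t ht => ⟨by rcases ht with ⟨h1', h2'⟩; linarith,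
            by rcases ht with ⟨h1', h2'⟩; linarith⟩)
      have hNbne : Nb ≠ M0 := by
        intro he
        have ht1U : t1 ∈ U0 := ⟨⟨by rcases ht1I with ⟨h1', _⟩; linarith, ht1I.2⟩,
          kb1, he ▸ hRb1⟩
        have := le_csSup hbdd ht1U
        rcases ht1I with ⟨h1', _⟩
        rw [← hts] at this
        linarith
      by_cases hts0' : ts = 0
      · obtain ⟨Nc, s1, s2, kc1, kc2, hs1I, hs2I, hs12, hRc1, hRc2⟩ :=
          hpigeon (Set.Ioo (-ε0) 0) (Set.Ioo_infinite (by linarith))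
            (fun t ht => ⟨by rcases ht with ⟨h1', h2'⟩; linarith,
              by rcases ht with ⟨h1', h2'⟩; linarith⟩)
        have hcl := CL hkP hRb1 hRb2 hRc1 hRc2 ht12 hs12
          (by rcases hs1I with ⟨ha', hb'⟩; rcases ht1I with ⟨hc', hd'⟩; nlinarith)
        exact hNbne hcl.symm
      · have htspos : 0 < ts := lt_of_le_of_ne hts0 (Ne.symm hts0')
        obtain ⟨kc1, hRc1⟩ := hlow (ts/2) (by linarith) (by linarith)
        obtain ⟨kc2, hRc2⟩ := hlow (ts/4) (by linarith) (by linarith)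
        have hcl := CL hkP hRb1 hRb2 hRc1 hRc2 ht12
          (by intro hc; nlinarith)
          (by rcases ht1I with ⟨hc', hd'⟩; nlinarith)
        exact hNbne hcl.symm
  · -- the supremum itself is not realizable by M0
    have hts0' : 0 < ts := by
      rcases lt_or_eq_of_le hts0 with h' | h'
      · exact h'
      · exfalso
        apply hPts
        rw [← h']
        exact ⟨k0, hRz0⟩
    obtain ⟨Na, ka, hRa⟩ := hreal ts (by linarith) (by linarith)
    have hNane : Na ≠ M0 := by
      intro he
      exact hPts ⟨ka, he ▸ hRa⟩
    obtain ⟨kc0, hRc02⟩ := hlow (ts/2) (by linarith) (by linarith)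
    obtain ⟨Nc, s1, s2, kc1, kc2, hs1I, hs2I, hs12, hRc1, hRc2⟩ :=
      hpigeon (Set.Ioo ts (1 + ε0)) (Set.Ioo_infinite (by linarith))
        (fun t ht => ⟨by rcases ht with ⟨h1', h2'⟩; linarith,
          by rcases ht with ⟨h1', h2'⟩; linarith⟩)
    have hcl := CL hRa hRz0 hRc02 hRc1 hRc2
      (by intro hc; nlinarith : (0:ℝ) ≠ ts/2) hs12
      (by rcases hs1I with ⟨ha', hb'⟩; nlinarith)
    exact hNane (hcl.trans rfl) |>.elim

end RN0
/-- If `N` is a WR₀-realizable reaction network, then there exists a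
unique WR₀ network `N₀` such that `N` is realizable by `N₀`; moreover, the underlying
network of any WR₀ realization of `(N,κ)` equals `N₀`, independently of `κ`. -/
theorem wr0_realization_unique {n : ℕ} (N : ReactionNetwork n) (h : N.WR0Realizable) :
    ∃ N0 : ReactionNetwork n, N0.WR0 ∧ N.RealizableBy N0 ∧
      (∀ N' : ReactionNetwork n, N'.WR0 → N.RealizableBy N' → N' = N0) ∧
      (∀ (κ : Cplx n × Cplx n → ℝ) (Nκ : ReactionNetwork n) (kκ : Cplx n × Cplx n → ℝ),
        N.PosRates κ → Nκ.WR0 → Nκ.PosRates kκ →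
        ReactionNetwork.IsRealizationOf Nκ kκ N κ → Nκ = N0) := by
  classical
  have hone : N.PosRates (fun _ => 1) := fun r _ => one_pos
  obtain ⟨N0, k0, hW0, hp0, hr0⟩ := h _ hone
  refine ⟨N0, hW0, ?_, ?_, ?_⟩
  · intro κ hκ
    obtain ⟨N', k', hW', hp', hr'⟩ := h κ hκ
    have heq : N' = N0 := RN0.master h hκ hone hW' hp' hr' hW0 hp0 hr0
    exact ⟨k', heq ▸ hp', heq ▸ hr'⟩
  · intro N' hW' hRB
    obtain ⟨k', hp', hr'⟩ := hRB _ hone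
    exact RN0.master h hone hone hW' hp' hr' hW0 hp0 hr0
  · intro κ Nκ kκ hκ hWκ hpκ hrκ
    exact RN0.master h hκ hone hWκ hpκ hrκ hW0 hp0 hr0
end
end

section
/- Let N be a WR0-realizable reaction network on n species. Then for every source complex y of N, the zero vector does not lie in the relative interior of Cone_N(y); equivalently, there is no choice of strictly positive coefficients α_{y→y'} > 0 (one for each reaction of N with source y) such that Σ_{y→y'∈N} α_{y→y'} (y'−y) = 0. In particular, for every choice of positive rate constants κ, the net reaction vector w_y = Σ_{y→y'∈N} κ_{y→y'}(y'−y) of every source complex y of N is nonzero. -/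
/-!
Basic definitions for reaction networks, following the paper
"Weakly reversible deficiency zero realizations of reaction networks".
-/

noncomputable section

open Finset

section AuxProof

open ReactionNetwork

variable {n : ℕ}

/-- Elimination for generalized Dirichlet systems: if `∑ c z * (b z)^k = 0` for all
natural `k`, with the `b z` pairwise distinct, then all coefficients vanish. -/
private lemma RN_geom_elim {ι : Type*} (Z : Finset ι) :
    ∀ b c : ι → ℝ, Set.InjOn b Z → (∀ k : ℕ, ∑ z ∈ Z, c z * b z ^ k = 0) →
      ∀ z ∈ Z, c z = 0 := by
  classical
  induction Z using Finset.strongInduction with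
  | _ Z ih =>
    intro b c hb h z hz
    obtain ⟨z₀, hz₀⟩ : Z.Nonempty := ⟨z, hz⟩
    have hco : ∀ w ∈ Z.erase z₀, c w = 0 := by
      have key : ∀ w ∈ Z.erase z₀, c w * (b w - b z₀) = 0 := by
        refine ih (Z.erase z₀) (Finset.erase_ssubset hz₀) b
          (fun w => c w * (b w - b z₀))
          (hb.mono (by simpa using Finset.erase_subset z₀ Z)) ?_
        intro k
        have hsum : ∑ w ∈ Z, (c w * (b w - b z₀)) * b w ^ k
            = (∑ w ∈ Z, c w * b w ^ (k + 1)) - b z₀ * ∑ w ∈ Z, c w * b w ^ k := by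
          rw [Finset.mul_sum, ← Finset.sum_sub_distrib]
          refine Finset.sum_congr rfl fun w _ => by ring
        have hz' : ∑ w ∈ Z, (c w * (b w - b z₀)) * b w ^ k = 0 := by
          rw [hsum, h (k + 1), h k]; ring
        rwa [← Finset.add_sum_erase _ _ hz₀, sub_self, mul_zero, zero_mul, zero_add] at hz'
      intro w hw
      have hwne : w ≠ z₀ := (Finset.mem_erase.mp hw).1
      have hbne : b w - b z₀ ≠ 0 :=
        sub_ne_zero.mpr fun e => hwne (hb (Finset.mem_of_mem_erase hw) hz₀ e)
      exact (mul_eq_zero.mp (key w hw)).resolve_right hbne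
    by_cases hzz : z = z₀
    · subst hzz
      have h0 := h 0
      rw [← Finset.add_sum_erase _ _ hz₀,
        Finset.sum_eq_zero (fun w hw => by rw [hco w hw, zero_mul]), add_zero,
        pow_zero, mul_one] at h0
      exact h0
    · exact hco z (Finset.mem_erase.mpr ⟨hzz, hz⟩)

/-- There is a real number `T` such that `z ↦ ∑ i, z i * T^(i+1)` is injective on `Z`. -/
private lemma RN_exists_sep (Z : Finset (Cplx n)) :
    ∃ T : ℝ, Set.InjOn (fun z : Cplx n => ∑ i, z i * T ^ ((i : ℕ) + 1)) Z := by
  classical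
  have hpoly : ∀ d : Cplx n, d ≠ 0 →
      ({t : ℝ | ∑ i, d i * t ^ ((i : ℕ) + 1) = 0}).Finite := by
    intro d hd
    set p : Polynomial ℝ := ∑ i : Fin n, Polynomial.C (d i) * Polynomial.X ^ ((i : ℕ) + 1)
      with hp
    have hpne : p ≠ 0 := by
      obtain ⟨i₀, hi₀⟩ : ∃ i, d i ≠ 0 := by
        by_contra hc; push_neg at hc; exact hd (funext hc)
      intro h0
      have hc0 : p.coeff ((i₀ : ℕ) + 1) = d i₀ := by
        rw [hp, Polynomial.finset_sum_coeff, Finset.sum_eq_single i₀]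
        · simp [Polynomial.coeff_C_mul, Polynomial.coeff_X_pow]
        · intro j _ hj
          have hji : ¬((i₀ : ℕ) + 1 = (j : ℕ) + 1) := by
            simp only [add_left_inj]
            exact fun e => hj (Fin.ext e.symm)
          simp [Polynomial.coeff_C_mul, Polynomial.coeff_X_pow, hji, Fin.val_inj, Ne.symm hj]
        · simp
      rw [h0, Polynomial.coeff_zero] at hc0
      exact hi₀ hc0.symm
    refine (Polynomial.finite_setOf_isRoot hpne).subset ?_
    intro t ht
    simp only [Set.mem_setOf_eq] at ht ⊢
    show p.IsRoot t
    rw [Polynomial.IsRoot, hp, Polynomial.eval_finset_sum]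
    simpa [Polynomial.eval_mul, Polynomial.eval_pow] using ht
  have hbad : (⋃ q ∈ (↑(Z ×ˢ Z) : Set (Cplx n × Cplx n)),
      {t : ℝ | q.1 ≠ q.2 ∧ ∑ i, (q.1 i - q.2 i) * t ^ ((i : ℕ) + 1) = 0}).Finite := by
    refine Set.Finite.biUnion (Z ×ˢ Z).finite_toSet ?_
    intro q _
    by_cases hq : q.1 = q.2
    · convert Set.finite_empty using 1
      ext t; simp [hq]
    · refine (hpoly (q.1 - q.2) (sub_ne_zero.mpr hq)).subset ?_
      intro t ht
      simpa using ht.2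
  obtain ⟨T, hT⟩ := (hbad.infinite_compl).nonempty
  refine ⟨T, ?_⟩
  intro z hz z' hz' he
  by_contra hne
  have hmem : ((z, z') : Cplx n × Cplx n) ∈ (↑(Z ×ˢ Z) : Set (Cplx n × Cplx n)) := by
    rw [Finset.mem_coe, Finset.mem_product]
    exact ⟨Finset.mem_coe.mp hz, Finset.mem_coe.mp hz'⟩
  refine hT (Set.mem_biUnion hmem ?_)
  refine ⟨hne, ?_⟩
  have : ∑ i, (z i - z' i) * T ^ ((i : ℕ) + 1)
      = (∑ i, z i * T ^ ((i : ℕ) + 1)) - ∑ i, z' i * T ^ ((i : ℕ) + 1) := by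
    rw [← Finset.sum_sub_distrib]
    exact Finset.sum_congr rfl fun i _ => by ring
  rw [this]
  simp only at he
  rw [he, sub_self]

private lemma RN_monomial_exp (T : ℝ) (z : Cplx n) (k : ℕ) :
    ReactionNetwork.monomial (fun i => Real.exp (k * T ^ ((i : ℕ) + 1))) z
      = Real.exp (∑ i, z i * T ^ ((i : ℕ) + 1)) ^ k := by
  unfold ReactionNetwork.monomial
  have h1 : ∀ i : Fin n, Real.exp ((k : ℝ) * T ^ ((i : ℕ) + 1)) ^ z i
      = Real.exp ((k : ℝ) * T ^ ((i : ℕ) + 1) * z i) := by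
    intro i
    rw [Real.rpow_def_of_pos (Real.exp_pos _), Real.log_exp]
  rw [Finset.prod_congr rfl fun i _ => h1 i, ← Real.exp_sum, ← Real.exp_nat_mul]
  congr 1
  rw [Finset.mul_sum]
  exact Finset.sum_congr rfl fun i _ => by ring

/-- Linear independence of generalized monomials on the positive orthant. -/
private lemma RN_monomial_indep (Z : Finset (Cplx n)) (c : Cplx n → ℝ)
    (h : ∀ x : Cplx n, (∀ i, 0 < x i) → ∑ z ∈ Z, ReactionNetwork.monomial x z * c z = 0) :
    ∀ z ∈ Z, c z = 0 := by
  obtain ⟨T, hT⟩ := RN_exists_sep Z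
  refine RN_geom_elim Z (fun z => Real.exp (∑ i, z i * T ^ ((i : ℕ) + 1))) c ?_ ?_
  · intro z hz z' hz' he
    exact hT hz hz' (Real.exp_eq_exp.mp he)
  · intro k
    have hx := h (fun i => Real.exp (k * T ^ ((i : ℕ) + 1))) (fun i => Real.exp_pos _)
    rw [Finset.sum_congr rfl fun z _ => by rw [RN_monomial_exp]] at hx
    calc ∑ z ∈ Z, c z * Real.exp (∑ i, z i * T ^ ((i : ℕ) + 1)) ^ k
        = ∑ z ∈ Z, Real.exp (∑ i, z i * T ^ ((i : ℕ) + 1)) ^ k * c z :=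
          Finset.sum_congr rfl fun z _ => mul_comm _ _
      _ = 0 := hx

private lemma RN_net_zero (M : ReactionNetwork n) (κ : Cplx n × Cplx n → ℝ) (z : Cplx n)
    (hz : z ∉ M.sources) : M.netVector κ z = 0 := by
  unfold ReactionNetwork.netVector
  refine Finset.sum_eq_zero fun r hr => absurd ?_ hz
  obtain ⟨hr1, hr2⟩ := Finset.mem_filter.mp hr
  exact hr2 ▸ Finset.mem_image_of_mem Prod.fst hr1

private lemma RN_massAction_eq (M : ReactionNetwork n) (κ : Cplx n × Cplx n → ℝ)
    (x : Cplx n) :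
    M.massAction κ x
      = ∑ z ∈ M.sources, ReactionNetwork.monomial x z • M.netVector κ z := by
  classical
  unfold ReactionNetwork.massAction ReactionNetwork.netVector ReactionNetwork.sources
  rw [← Finset.sum_fiberwise_of_maps_to (g := Prod.fst)
    (fun r hr => Finset.mem_image_of_mem _ hr)
    (fun r => (κ r * ReactionNetwork.monomial x r.1) • (r.2 - r.1))]
  refine Finset.sum_congr rfl fun z _ => ?_
  rw [Finset.smul_sum]
  have hset : M.reactions.filter (fun r => r.1 = z)
      = M.reactionsFrom z := by
    unfold ReactionNetwork.reactionsFrom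
    exact Finset.filter_congr_decidable _ _ _
  rw [← hset]
  refine Finset.sum_congr rfl fun r hr => ?_
  rw [(Finset.mem_filter.mp hr).2, mul_comm, mul_smul]

/-- A realization has the same net reaction vectors. -/
private lemma RN_net_eq_of_real {M M' : ReactionNetwork n}
    {κ κ' : Cplx n × Cplx n → ℝ}
    (h : ReactionNetwork.IsRealizationOf M' κ' M κ) :
    ∀ z, M'.netVector κ' z = M.netVector κ z := by
  classical
  set Z := M'.sources ∪ M.sources with hZ
  have hzero : ∀ z ∈ Z, M'.netVector κ' z = M.netVector κ z := by
    have hsum : ∀ x : Cplx n, (∀ i, 0 < x i) →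
        ∑ z ∈ Z, ReactionNetwork.monomial x z • (M'.netVector κ' z - M.netVector κ z)
          = 0 := by
      intro x hx
      have h1 : ∑ z ∈ Z, ReactionNetwork.monomial x z • M'.netVector κ' z
          = M'.massAction κ' x := by
        rw [RN_massAction_eq]
        refine (Finset.sum_subset Finset.subset_union_left fun z _ hz => ?_).symm
        rw [RN_net_zero M' κ' z hz, smul_zero]
      have h2 : ∑ z ∈ Z, ReactionNetwork.monomial x z • M.netVector κ z
          = M.massAction κ x := by
        rw [RN_massAction_eq]
        refine (Finset.sum_subset Finset.subset_union_right fun z _ hz => ?_).symm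
        rw [RN_net_zero M κ z hz, smul_zero]
      simp only [smul_sub, Finset.sum_sub_distrib, h1, h2, h x hx, sub_self]
    intro z hzZ
    have hcomp : ∀ j : Fin n,
        (M'.netVector κ' z - M.netVector κ z) j = 0 := by
      intro j
      refine RN_monomial_indep Z (fun w => (M'.netVector κ' w - M.netVector κ w) j)
        (fun x hx => ?_) z hzZ
      have := congrFun (hsum x hx) j
      rw [Finset.sum_apply] at this
      simpa [Pi.smul_apply, smul_eq_mul] using this
    have : M'.netVector κ' z - M.netVector κ z = 0 := funext fun j => hcomp j
    exact sub_eq_zero.mp this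
  intro z
  by_cases hzZ : z ∈ Z
  · exact hzero z hzZ
  · rw [RN_net_zero M' κ' z fun hc => hzZ (Finset.mem_union_left _ hc),
      RN_net_zero M κ z fun hc => hzZ (Finset.mem_union_right _ hc)]

/- Basic structure of weakly reversible networks. -/

private lemma RN_fst_mem_complexes {G : ReactionNetwork n} {r : Cplx n × Cplx n}
    (hr : r ∈ G.reactions) : r.1 ∈ G.complexes :=
  Finset.mem_union_left _ (Finset.mem_image_of_mem _ hr)

private lemma RN_snd_mem_complexes {G : ReactionNetwork n} {r : Cplx n × Cplx n}
    (hr : r ∈ G.reactions) : r.2 ∈ G.complexes :=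
  Finset.mem_union_right _ (Finset.mem_image_of_mem _ hr)

private lemma RN_sources_subset {G : ReactionNetwork n} :
    G.sources ⊆ G.complexes := Finset.subset_union_left

private lemma RN_mem_sources_of_mem_complexes {G : ReactionNetwork n}
    (hwr : G.WeaklyReversible) {z : Cplx n} (hz : z ∈ G.complexes) : z ∈ G.sources := by
  unfold ReactionNetwork.complexes at hz
  rcases Finset.mem_union.mp hz with h | h
  · exact h
  · obtain ⟨r, hr, hr2⟩ := Finset.mem_image.mp h
    rcases Relation.ReflTransGen.cases_head (hwr r hr) with heq | ⟨w, hw, -⟩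
    · exact absurd heq.symm (G.no_loops r hr)
    · exact Finset.mem_image.mpr ⟨(r.2, w), hw, hr2⟩

private lemma RN_linked_symm {G : ReactionNetwork n} {a b : Cplx n}
    (h : G.linked a b) : G.linked b a :=
  by
    haveI : Std.Symm (fun u v : Cplx n => (u, v) ∈ G.reactions ∨ (v, u) ∈ G.reactions) :=
      ⟨fun _ _ hs => Or.symm hs⟩
    exact (Relation.ReflTransGen.stdSymm
      (r := fun u v : Cplx n => (u, v) ∈ G.reactions ∨ (v, u) ∈ G.reactions)).symm _ _ h

private lemma RN_linked_edge {G : ReactionNetwork n} {r : Cplx n × Cplx n}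
    (hr : r ∈ G.reactions) : G.linked r.1 r.2 :=
  Relation.ReflTransGen.single (Or.inl hr)

private lemma RN_directed_of_linked {G : ReactionNetwork n}
    (hwr : G.WeaklyReversible) {a b : Cplx n} (h : G.linked a b) :
    Relation.ReflTransGen (fun u v => (u, v) ∈ G.reactions) a b := by
  induction h with
  | refl => exact .refl
  | tail _ hstep ih =>
    rcases hstep with he | he
    · exact ih.tail he
    · exact ih.trans (hwr (_, _) he)

private lemma RN_mem_sources_of_net_ne {G : ReactionNetwork n}
    {κ : Cplx n × Cplx n → ℝ} {z : Cplx n} (h : G.netVector κ z ≠ 0) :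
    z ∈ G.sources := by
  by_contra hc
  exact h (RN_net_zero G κ z hc)

private lemma RN_eta_net {G : ReactionNetwork n} (κ : Cplx n × Cplx n → ℝ)
    (η : Cplx n →ₗ[ℝ] ℝ) (p : Cplx n) :
    η (G.netVector κ p) = ∑ r ∈ G.reactionsFrom p, κ r * (η r.2 - η r.1) := by
  unfold ReactionNetwork.netVector
  rw [map_sum]
  refine Finset.sum_congr rfl fun r _ => ?_
  rw [map_smul, map_sub]
  rfl

/-- The maximum-principle argument: a weakly reversible network cannot have all
`η`-net-values nonnegative and strictly positive at a complex `y`. -/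
private lemma RN_extremal {G : ReactionNetwork n} (hwr : G.WeaklyReversible)
    {κ : Cplx n × Cplx n → ℝ} (hκ : G.PosRates κ) (η : Cplx n →ₗ[ℝ] ℝ) {y : Cplx n}
    (hy : y ∈ G.complexes)
    (hpos : 0 < η (G.netVector κ y))
    (hnn : ∀ p, p ≠ y → 0 ≤ η (G.netVector κ p)) : False := by
  classical
  set B₀ : Finset (Cplx n) := G.complexes.filter (fun w => G.linked y w) with hB₀
  have hyB : y ∈ B₀ := Finset.mem_filter.mpr ⟨hy, .refl⟩
  have hBne : (B₀.image η).Nonempty := ⟨η y, Finset.mem_image_of_mem _ hyB⟩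
  set m := (B₀.image η).max' hBne with hm
  have hle : ∀ p ∈ B₀, η p ≤ m := fun p hp =>
    Finset.le_max' _ _ (Finset.mem_image_of_mem _ hp)
  -- out-edges from B₀ stay in B₀
  have hstay : ∀ {p r}, p ∈ B₀ → r ∈ G.reactionsFrom p → r.2 ∈ B₀ := by
    intro p r hp hr
    obtain ⟨hrR, hr1⟩ := Finset.mem_filter.mp hr
    refine Finset.mem_filter.mpr ⟨RN_snd_mem_complexes hrR, ?_⟩
    exact ((Finset.mem_filter.mp hp).2).trans (hr1 ▸ RN_linked_edge hrR)
  -- a complex at the maximal level has nonpositive η-net-value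
  have hnonpos : ∀ p ∈ B₀, η p = m → η (G.netVector κ p) ≤ 0 := by
    intro p hp hpm
    rw [RN_eta_net]
    refine Finset.sum_nonpos fun r hr => ?_
    obtain ⟨hrR, hr1⟩ := Finset.mem_filter.mp hr
    have h2 : η r.2 ≤ m := hle _ (hstay hp hr)
    have h1 : η r.1 = m := by rw [hr1, hpm]
    have := hκ r hrR
    nlinarith [this, h2, h1]
  -- at the maximal level with p ≠ y, all out-neighbours are at the maximal level
  have hprop : ∀ p ∈ B₀, η p = m → p ≠ y →
      ∀ r ∈ G.reactionsFrom p, r.2 ∈ B₀ ∧ η r.2 = m := by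
    intro p hp hpm hpy r hr
    have hz : η (G.netVector κ p) = 0 :=
      le_antisymm (hnonpos p hp hpm) (hnn p hpy)
    rw [RN_eta_net] at hz
    have ht : κ r * (η r.2 - η r.1) = 0 := by
      refine (Finset.sum_eq_zero_iff_of_nonpos fun r' hr' => ?_).mp hz r hr
      obtain ⟨hrR', hr1'⟩ := Finset.mem_filter.mp hr'
      have h2 : η r'.2 ≤ m := hle _ (hstay hp hr')
      have h1 : η r'.1 = m := by rw [hr1', hpm]
      nlinarith [hκ r' hrR']
    obtain ⟨hrR, hr1⟩ := Finset.mem_filter.mp hr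
    have heq : η r.2 - η r.1 = 0 := by
      rcases mul_eq_zero.mp ht with hc | hc
      · exact absurd hc (ne_of_gt (hκ r hrR))
      · exact hc
    refine ⟨hstay hp hr, ?_⟩
    have h1 : η r.1 = m := by rw [hr1, hpm]
    have := sub_eq_zero.mp heq
    rw [this, h1]
  -- pick a maximal element and walk to `y`
  obtain ⟨p₀, hp₀B, hp₀m⟩ : ∃ p ∈ B₀, η p = m := by
    have hmm := (B₀.image η).max'_mem hBne
    rw [← hm] at hmm
    obtain ⟨p, hp, hpm⟩ := Finset.mem_image.mp hmm
    exact ⟨p, hp, hpm⟩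
  have hpath : Relation.ReflTransGen (fun u v => (u, v) ∈ G.reactions) p₀ y :=
    RN_directed_of_linked hwr (RN_linked_symm (Finset.mem_filter.mp hp₀B).2)
  have hwalk : ∀ a, Relation.ReflTransGen (fun u v => (u, v) ∈ G.reactions) a y →
      a ∈ B₀ → η a = m → False := by
    intro a h
    induction h using Relation.ReflTransGen.head_induction_on with
    | refl =>
      intro haB ham
      exact absurd hpos (not_lt.mpr (hnonpos y haB ham))
    | head hstep htail ih =>
      intro haB ham
      rename_i a' c'
      by_cases hay : a' = y
      · subst hay
        exact absurd hpos (not_lt.mpr (hnonpos _ haB ham))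
      · have hrmem : ((a', c') : Cplx n × Cplx n) ∈ G.reactionsFrom a' :=
          Finset.mem_filter.mpr ⟨hstep, rfl⟩
        obtain ⟨hc'B, hc'm⟩ := hprop a' haB ham hay _ hrmem
        exact ih hc'B hc'm
  exact hwalk p₀ hpath hp₀B hp₀m

/-- The key consequence of weak reversibility plus deficiency zero: there is a linear
functional `η` whose increment is `-1` along every reaction leaving `y` and
nonnegative along every other reaction. -/
private lemma RN_exists_eta (G : ReactionNetwork n) (hwr : G.WeaklyReversible)
    (hdef : G.DeficiencyZero) (y : Cplx n) (hy : y ∈ G.complexes) :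
    ∃ η : Cplx n →ₗ[ℝ] ℝ,
      (∀ r ∈ G.reactions, r.1 = y → η r.2 - η r.1 = -1) ∧
      (∀ r ∈ G.reactions, r.1 ≠ y → 0 ≤ η r.2 - η r.1) := by
  classical
  -- the linkage class of a vertex, as a Finset
  set cls : Cplx n → Finset (Cplx n) :=
    fun z => G.complexes.filter (fun w => G.linked z w) with hcls
  have mem_cls : ∀ {z w : Cplx n}, w ∈ cls z ↔ w ∈ G.complexes ∧ G.linked z w := by
    intro z w; rw [hcls]; exact Finset.mem_filter
  have self_mem : ∀ {z : Cplx n}, z ∈ G.complexes → z ∈ cls z :=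
    fun hz => mem_cls.mpr ⟨hz, .refl⟩
  have cls_eq : ∀ {z w : Cplx n}, G.linked z w → cls w = cls z := by
    intro z w hzw
    ext v
    rw [mem_cls, mem_cls]
    exact ⟨fun ⟨hv, hl⟩ => ⟨hv, hzw.trans hl⟩,
      fun ⟨hv, hl⟩ => ⟨hv, (RN_linked_symm hzw).trans hl⟩⟩
  have cls_eq_of_mem : ∀ {z w : Cplx n}, w ∈ cls z → cls w = cls z :=
    fun h => cls_eq (mem_cls.mp h).2
  have edge_mem_cls : ∀ {r : Cplx n × Cplx n}, r ∈ G.reactions → r.2 ∈ cls r.1 :=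
    fun hr => mem_cls.mpr ⟨RN_snd_mem_complexes hr, RN_linked_edge hr⟩
  set classes : Finset (Finset (Cplx n)) := G.complexes.image cls with hclasses
  have cls_mem_classes : ∀ {z : Cplx n}, z ∈ G.complexes → cls z ∈ classes :=
    fun hz => Finset.mem_image_of_mem _ hz
  have classes_rep : ∀ K ∈ classes, ∃ z ∈ G.complexes, K = cls z := by
    intro K hK
    obtain ⟨z, hz, he⟩ := Finset.mem_image.mp hK
    exact ⟨z, hz, he.symm⟩
  -- complexes decompose as the disjoint union of the classes
  have hcover : G.complexes = classes.biUnion (fun K => K) := by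
    ext z
    constructor
    · intro hz
      exact Finset.mem_biUnion.mpr ⟨cls z, cls_mem_classes hz, self_mem hz⟩
    · intro hz
      obtain ⟨K, hK, hzK⟩ := Finset.mem_biUnion.mp hz
      obtain ⟨w, _, rfl⟩ := classes_rep K hK
      exact (mem_cls.mp hzK).1
  have hdisj : ∀ K ∈ classes, ∀ K' ∈ classes, K ≠ K' → Disjoint K K' := by
    intro K hK K' hK' hne
    obtain ⟨w, _, rfl⟩ := classes_rep K hK
    obtain ⟨w', _, rfl⟩ := classes_rep K' hK'
    rw [Finset.disjoint_left]
    intro z hzK hzK'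
    exact hne ((cls_eq_of_mem hzK).symm.trans (cls_eq_of_mem hzK'))
  have hcard : G.complexes.card = ∑ K ∈ classes, K.card := by
    rw [hcover, Finset.card_biUnion fun K hK K' hK' h => hdisj K hK K' hK' h]
  -- the number of linkage classes equals `classes.card`
  have hnum : G.numLinkageClasses = classes.card := by
    unfold ReactionNetwork.numLinkageClasses ReactionNetwork.linkagePartition
    have hlc : ∀ w : Cplx n, G.linkageClass w = (↑(cls w) : Set (Cplx n)) := by
      intro w
      ext v
      simp only [ReactionNetwork.linkageClass, Set.mem_setOf_eq, Finset.mem_coe, mem_cls]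
    have h1 : {C : Set (Cplx n) | ∃ w ∈ G.complexes, C = G.linkageClass w}
        = (fun K : Finset (Cplx n) => (↑K : Set (Cplx n))) '' ↑classes := by
      ext C
      constructor
      · rintro ⟨w, hw, rfl⟩
        exact ⟨cls w, Finset.mem_coe.mpr (cls_mem_classes hw), (hlc w).symm⟩
      · rintro ⟨K, hK, rfl⟩
        obtain ⟨w, hw, rfl⟩ := classes_rep K (Finset.mem_coe.mp hK)
        exact ⟨w, hw, (hlc w).symm⟩
    rw [h1, Set.ncard_image_of_injective _ Finset.coe_injective, Set.ncard_coe_finset]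
  -- classes are nonempty; the class of y has at least two elements
  have classes_ne : ∀ K ∈ classes, K.Nonempty := by
    intro K hK
    obtain ⟨z, hz, rfl⟩ := classes_rep K hK
    exact ⟨z, self_mem hz⟩
  obtain ⟨ry, hry, hry1⟩ : ∃ r ∈ G.reactions, r.1 = y := by
    have := RN_mem_sources_of_mem_complexes hwr hy
    unfold ReactionNetwork.sources at this
    obtain ⟨r, hr, hr1⟩ := Finset.mem_image.mp this
    exact ⟨r, hr, hr1⟩
  have herase : ∀ K ∈ classes, (K.erase y).Nonempty := by
    intro K hK
    by_cases hyK : y ∈ K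
    · obtain ⟨z, hz, rfl⟩ := classes_rep K hK
      have hKy : cls z = cls y := (cls_eq_of_mem hyK).symm
      refine ⟨ry.2, Finset.mem_erase.mpr ⟨?_, ?_⟩⟩
      · exact fun he => (G.no_loops ry hry) (hry1.trans he.symm)
      · rw [hKy]
        have := edge_mem_cls hry
        rwa [hry1] at this
    · rw [Finset.erase_eq_of_notMem hyK]
      exact classes_ne K hK
  set base : Finset (Cplx n) → Cplx n :=
    fun K => if h : (K.erase y).Nonempty then h.choose else y with hbase
  have base_spec : ∀ K ∈ classes, base K ∈ K ∧ base K ≠ y := by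
    intro K hK
    have hne := herase K hK
    have hbeq : base K = hne.choose := by rw [hbase]; exact dif_pos hne
    have := hne.choose_spec
    rw [← hbeq] at this
    exact ⟨Finset.mem_of_mem_erase this, (Finset.mem_erase.mp this).1⟩
  -- index set for the basis of the stoichiometric subspace
  set I : Finset (Finset (Cplx n) × Cplx n) :=
    classes.biUnion (fun K => (K.erase (base K)).image (fun p => (K, p))) with hI
  have mem_I : ∀ {K : Finset (Cplx n)} {p : Cplx n},
      (K, p) ∈ I ↔ K ∈ classes ∧ p ∈ K.erase (base K) := by
    intro K p
    simp only [hI, Finset.mem_biUnion, Finset.mem_image]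
    constructor
    · rintro ⟨K', hK', q, hq, he⟩
      obtain ⟨h1, h2⟩ := Prod.mk.injEq _ _ _ _ ▸ he
      exact ⟨h1 ▸ hK', h1 ▸ h2 ▸ hq⟩
    · rintro ⟨hK, hp⟩
      exact ⟨K, hK, p, hp, rfl⟩
  have card_I : I.card = ∑ K ∈ classes, (K.card - 1) := by
    rw [hI, Finset.card_biUnion]
    · refine Finset.sum_congr rfl fun K hK => ?_
      rw [Finset.card_image_of_injective _ (fun a b hab => (Prod.mk.injEq _ _ _ _ ▸ hab).2),
        Finset.card_erase_of_mem (base_spec K hK).1]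
    · intro K hK K' hK' hne
      rw [Function.onFun, Finset.disjoint_left]
      rintro ⟨K₁, p⟩ h1 h2
      obtain ⟨q, _, he⟩ := Finset.mem_image.mp h1
      obtain ⟨q', _, he'⟩ := Finset.mem_image.mp h2
      exact hne (((Prod.mk.injEq _ _ _ _ ▸ he).1).trans
        ((Prod.mk.injEq _ _ _ _ ▸ he').1).symm)
  have card_I' : I.card = Module.finrank ℝ G.stoichSubspace := by
    have h2 : ∑ K ∈ classes, (K.card - 1) + classes.card = ∑ K ∈ classes, K.card := by
      rw [Finset.card_eq_sum_ones classes, ← Finset.sum_add_distrib]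
      refine Finset.sum_congr rfl fun K hK => ?_
      have h1 : 1 ≤ K.card := Finset.card_pos.mpr (classes_ne K hK)
      omega
    have h3 : G.complexes.card
        = G.numLinkageClasses + Module.finrank ℝ G.stoichSubspace := hdef
    rw [hcard, hnum] at h3
    rw [card_I]
    omega
  -- the difference family
  set ν : Finset (Cplx n) × Cplx n → Cplx n := fun i => i.2 - base i.1 with hν
  have diff_mem : ∀ {a b : Cplx n}, G.linked a b → b - a ∈ G.stoichSubspace := by
    intro a b h
    induction h with
    | refl => simpa using Submodule.zero_mem _
    | @tail c b _ h2 ih =>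
      have hcb : b - c ∈ G.stoichSubspace := by
        rcases h2 with he | he
        · exact Submodule.subset_span ⟨(c, b), he, rfl⟩
        · have : c - b ∈ G.stoichSubspace := Submodule.subset_span ⟨(b, c), he, rfl⟩
          have := Submodule.neg_mem _ this
          rwa [neg_sub] at this
      have := Submodule.add_mem _ hcb ih
      rwa [sub_add_sub_cancel] at this
  have linked_of_same_cls : ∀ {K : Finset (Cplx n)}, K ∈ classes →
      ∀ {p q : Cplx n}, p ∈ K → q ∈ K → G.linked p q := by
    intro K hK p q hp hq
    obtain ⟨z, _, rfl⟩ := classes_rep K hK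
    exact (RN_linked_symm (mem_cls.mp hp).2).trans (mem_cls.mp hq).2
  have ν_mem : ∀ i ∈ I, ν i ∈ G.stoichSubspace := by
    rintro ⟨K, p⟩ hi
    obtain ⟨hK, hp⟩ := mem_I.mp hi
    exact diff_mem (linked_of_same_cls hK (base_spec K hK).1 (Finset.mem_of_mem_erase hp))
  have span_eq : Submodule.span ℝ (ν '' ↑I) = G.stoichSubspace := by
    apply le_antisymm
    · rw [Submodule.span_le]
      rintro v ⟨i, hi, rfl⟩
      exact ν_mem i (Finset.mem_coe.mp hi)
    · unfold ReactionNetwork.stoichSubspace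
      rw [Submodule.span_le]
      rintro v ⟨r, hr, rfl⟩
      have hK : cls r.1 ∈ classes := cls_mem_classes (RN_fst_mem_complexes hr)
      have hin : ∀ q ∈ cls r.1,
          q - base (cls r.1) ∈ Submodule.span ℝ (ν '' ↑I) := by
        intro q hq
        by_cases hqb : q = base (cls r.1)
        · rw [hqb, sub_self]; exact Submodule.zero_mem _
        · exact Submodule.subset_span ⟨(cls r.1, q),
            Finset.mem_coe.mpr (mem_I.mpr ⟨hK, Finset.mem_erase.mpr ⟨hqb, hq⟩⟩), rfl⟩
      have h1 := hin r.1 (self_mem (RN_fst_mem_complexes hr))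
      have h2 := hin r.2 (edge_mem_cls hr)
      have := Submodule.sub_mem _ h2 h1
      rwa [sub_sub_sub_cancel_right] at this
  -- linear independence of the family
  set f : {i // i ∈ I} → Cplx n := fun i => ν i.1 with hf
  have hrange : Set.range f = ν '' ↑I := by
    rw [hf]
    ext v
    constructor
    · rintro ⟨⟨i, hi⟩, rfl⟩; exact ⟨i, Finset.mem_coe.mpr hi, rfl⟩
    · rintro ⟨i, hi, rfl⟩; exact ⟨⟨i, Finset.mem_coe.mp hi⟩, rfl⟩
  have hli : LinearIndependent ℝ f := by
    rw [linearIndependent_iff_card_eq_finrank_span]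
    unfold Set.finrank
    rw [hrange, span_eq, Fintype.card_coe]
    exact card_I'
  have hsetli : LinearIndepOn ℝ id (ν '' ↑I) := by
    have := (linearIndepOn_id_range_iff hli.injective).mpr hli
    rwa [hrange] at this
  set s : Set (Cplx n) := ν '' ↑I with hs
  set B := Module.Basis.extend hsetli with hB
  have hsub : s ⊆ hsetli.extend (Set.subset_univ s) := hsetli.subset_extend _
  have hyI : ((cls y, y) : Finset (Cplx n) × Cplx n) ∈ I :=
    mem_I.mpr ⟨cls_mem_classes hy,
      Finset.mem_erase.mpr ⟨Ne.symm (base_spec _ (cls_mem_classes hy)).2, self_mem hy⟩⟩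
  set v₀ : Cplx n := y - base (cls y) with hv₀
  have hv₀s : v₀ ∈ s := ⟨(cls y, y), Finset.mem_coe.mpr hyI, rfl⟩
  have hv₀mem : v₀ ∈ hsetli.extend (Set.subset_univ s) := hsub hv₀s
  set η : Cplx n →ₗ[ℝ] ℝ := B.coord ⟨v₀, hv₀mem⟩ with hη
  -- injectivity of the family on I
  have hν_inj : ∀ i ∈ I, ∀ j ∈ I, ν i = ν j → i = j := by
    intro i hi j hj he
    have h1 : f ⟨i, hi⟩ = f ⟨j, hj⟩ := he
    have := hli.injective h1
    exact congrArg Subtype.val this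
  -- η on the family
  have hηbasis : ∀ w ∈ s, η w = if w = v₀ then 1 else 0 := by
    intro w hw
    have hwmem := hsub hw
    have e0 : B ⟨w, hwmem⟩ = w := Module.Basis.extend_apply_self hsetli ⟨w, hwmem⟩
    have e1 : η w = B.repr (B ⟨w, hwmem⟩) ⟨v₀, hv₀mem⟩ := by
      rw [hη, Module.Basis.coord_apply, e0]
    rw [e1, Module.Basis.repr_self, Finsupp.single_apply]
    by_cases hwv : w = v₀
    · rw [if_pos (Subtype.ext hwv), if_pos hwv]
    · rw [if_neg (fun hc => hwv (congrArg Subtype.val hc)), if_neg hwv]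
  have hcoord : ∀ K ∈ classes, ∀ q ∈ K,
      η (q - base K) = if q = y ∧ K = cls y then 1 else 0 := by
    intro K hK q hq
    by_cases hqb : q = base K
    · rw [hqb, sub_self, map_zero, if_neg]
      rintro ⟨hby, -⟩
      exact (base_spec K hK).2 hby
    · have hmem : ((K, q) : Finset (Cplx n) × Cplx n) ∈ I :=
        mem_I.mpr ⟨hK, Finset.mem_erase.mpr ⟨hqb, hq⟩⟩
      have hqs : q - base K ∈ s := ⟨(K, q), Finset.mem_coe.mpr hmem, rfl⟩
      rw [hηbasis _ hqs]
      by_cases hiq : ((K, q) : Finset (Cplx n) × Cplx n) = (cls y, y)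
      · have h1 : K = cls y := congrArg Prod.fst hiq
        have h2 : q = y := congrArg Prod.snd hiq
        have hv : q - base K = v₀ := by rw [hv₀, h1, h2]
        rw [if_pos hv, if_pos ⟨h2, h1⟩]
      · rw [if_neg, if_neg]
        · rintro ⟨rfl, rfl⟩; exact hiq rfl
        · intro he
          exact hiq (hν_inj _ hmem _ hyI he)
  -- conclusion
  refine ⟨η, ?_, ?_⟩
  · intro r hr hr1
    have hc : r.1 ∈ G.complexes := RN_fst_mem_complexes hr
    have hK : cls r.1 ∈ classes := cls_mem_classes hc
    have h1 : r.1 ∈ cls r.1 := self_mem hc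
    have h2 : r.2 ∈ cls r.1 := edge_mem_cls hr
    have e : η r.2 - η r.1
        = η (r.2 - base (cls r.1)) - η (r.1 - base (cls r.1)) := by
      rw [map_sub, map_sub]; ring
    rw [e, hcoord _ hK _ h2, hcoord _ hK _ h1]
    have hcy : cls r.1 = cls y := by rw [hr1]
    rw [if_neg, if_pos ⟨hr1, hcy⟩]
    · norm_num
    · rintro ⟨h2y, -⟩
      exact (G.no_loops r hr) (hr1.trans (h2y.symm))
  · intro r hr hr1
    have hc : r.1 ∈ G.complexes := RN_fst_mem_complexes hr
    have hK : cls r.1 ∈ classes := cls_mem_classes hc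
    have h1 : r.1 ∈ cls r.1 := self_mem hc
    have h2 : r.2 ∈ cls r.1 := edge_mem_cls hr
    have e : η r.2 - η r.1
        = η (r.2 - base (cls r.1)) - η (r.1 - base (cls r.1)) := by
      rw [map_sub, map_sub]; ring
    rw [e, hcoord _ hK _ h2, hcoord _ hK _ h1]
    have hneg : ¬(r.1 = y ∧ cls r.1 = cls y) := fun hc' => hr1 hc'.1
    rw [if_neg hneg]
    split <;> norm_num

end AuxProof

/-- If `N` is WR₀-realizable then for every source complex `y` of `N`,
the zero vector is not in the relative interior of `Cone_N(y)`: there is no strictly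
positive combination of the reaction vectors with source `y` summing to zero.
In particular, the net reaction vector of every source complex is nonzero for every
choice of positive rate constants. -/
theorem zero_not_in_relint_cone {n : ℕ} (N : ReactionNetwork n) (h : N.WR0Realizable)
    (y : Cplx n) (hy : y ∈ N.sources) :
    (¬ ∃ α : Cplx n × Cplx n → ℝ, (∀ r ∈ N.reactionsFrom y, 0 < α r) ∧
        ∑ r ∈ N.reactionsFrom y, α r • (r.2 - r.1) = 0) ∧
    (∀ κ : Cplx n × Cplx n → ℝ, N.PosRates κ → N.netVector κ y ≠ 0) := by
  classical
  have H1 : ¬ ∃ α : Cplx n × Cplx n → ℝ, (∀ r ∈ N.reactionsFrom y, 0 < α r) ∧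
      ∑ r ∈ N.reactionsFrom y, α r • (r.2 - r.1) = 0 := by
    rintro ⟨α, hαpos, hαsum⟩
    obtain ⟨r₀, hr₀⟩ : (N.reactionsFrom y).Nonempty := by
      unfold ReactionNetwork.sources at hy
      obtain ⟨r, hr, hr1⟩ := Finset.mem_image.mp hy
      exact ⟨r, Finset.mem_filter.mpr ⟨hr, hr1⟩⟩
    have hr₀R : r₀ ∈ N.reactions := (Finset.mem_filter.mp hr₀).1
    have hr₀1 : r₀.1 = y := (Finset.mem_filter.mp hr₀).2
    set u : Cplx n := α r₀ • (r₀.2 - r₀.1) with hu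
    have hune : u ≠ 0 :=
      smul_ne_zero (ne_of_gt (hαpos r₀ hr₀))
        (sub_ne_zero.mpr (Ne.symm (N.no_loops r₀ hr₀R)))
    set κp : Cplx n × Cplx n → ℝ := fun r =>
      if r ∈ N.reactionsFrom y then (if r = r₀ then 2 * α r else α r) else 1 with hκp
    set κm : Cplx n × Cplx n → ℝ := fun r =>
      if r ∈ N.reactionsFrom y then (if r = r₀ then α r else 2 * α r) else 1 with hκm
    have hκp_pos : N.PosRates κp := by
      intro r hr
      rw [hκp]; dsimp only
      by_cases h1 : r ∈ N.reactionsFrom y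
      · rw [if_pos h1]
        by_cases h2 : r = r₀
        · rw [if_pos h2]; nlinarith [hαpos r h1]
        · rw [if_neg h2]; exact hαpos r h1
      · rw [if_neg h1]; norm_num
    have hκm_pos : N.PosRates κm := by
      intro r hr
      rw [hκm]; dsimp only
      by_cases h1 : r ∈ N.reactionsFrom y
      · rw [if_pos h1]
        by_cases h2 : r = r₀
        · rw [if_pos h2]; exact hαpos r h1
        · rw [if_neg h2]; nlinarith [hαpos r h1]
      · rw [if_neg h1]; norm_num
    -- net vectors of `N`
    have hup : N.netVector κp y = u := by
      unfold ReactionNetwork.netVector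
      have hterm : ∀ r ∈ N.reactionsFrom y, κp r • (r.2 - r.1)
          = α r • (r.2 - r.1) + (if r = r₀ then α r else 0) • (r.2 - r.1) := by
        intro r hr
        rw [hκp]; dsimp only
        rw [if_pos hr]
        by_cases hrr : r = r₀
        · rw [if_pos hrr, if_pos hrr, two_mul, add_smul]
        · rw [if_neg hrr, if_neg hrr, zero_smul, add_zero]
      rw [Finset.sum_congr rfl hterm, Finset.sum_add_distrib, hαsum, zero_add,
        Finset.sum_eq_single r₀]
      · rw [if_pos rfl]
      · intro r _ hrne; rw [if_neg hrne, zero_smul]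
      · intro hc; exact absurd hr₀ hc
    have hum : N.netVector κm y = -u := by
      unfold ReactionNetwork.netVector
      have hterm : ∀ r ∈ N.reactionsFrom y, κm r • (r.2 - r.1)
          = (2 * α r) • (r.2 - r.1) - (if r = r₀ then α r else 0) • (r.2 - r.1) := by
        intro r hr
        rw [hκm]; dsimp only
        rw [if_pos hr]
        by_cases hrr : r = r₀
        · rw [if_pos hrr, if_pos hrr, two_mul, add_smul, add_sub_cancel_right]
        · rw [if_neg hrr, if_neg hrr, zero_smul, sub_zero]
      have h1 : ∑ r ∈ N.reactionsFrom y, (2 * α r) • (r.2 - r.1) = 0 := by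
        have he : ∀ r ∈ N.reactionsFrom y, (2 * α r) • (r.2 - r.1)
            = (2 : ℝ) • (α r • (r.2 - r.1)) := fun r _ => by rw [smul_smul]
        rw [Finset.sum_congr rfl he, ← Finset.smul_sum, hαsum, smul_zero]
      rw [Finset.sum_congr rfl hterm, Finset.sum_sub_distrib, h1,
        Finset.sum_eq_single r₀]
      · rw [if_pos rfl, zero_sub]
      · intro r _ hrne; rw [if_neg hrne, zero_smul]
      · intro hc; exact absurd hr₀ hc
    have hsame : ∀ z, z ≠ y → N.netVector κp z = N.netVector κm z := by
      intro z hz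
      unfold ReactionNetwork.netVector
      refine Finset.sum_congr rfl fun r hr => ?_
      have hrny : r ∉ N.reactionsFrom y := fun hc =>
        hz (((Finset.mem_filter.mp hr).2).symm.trans (Finset.mem_filter.mp hc).2)
      rw [hκp, hκm]; dsimp only
      rw [if_neg hrny, if_neg hrny]
    -- the two WR₀ realizations
    obtain ⟨Gp, kp, ⟨hwrp, hdefp⟩, hkp, hrealp⟩ := h κp hκp_pos
    obtain ⟨Gm, km, ⟨hwrm, hdefm⟩, hkm, hrealm⟩ := h κm hκm_pos
    have hnetp := RN_net_eq_of_real hrealp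
    have hnetm := RN_net_eq_of_real hrealm
    have hGpy : Gp.netVector kp y ≠ 0 := by rw [hnetp y, hup]; exact hune
    have hyp : y ∈ Gp.complexes := RN_sources_subset (RN_mem_sources_of_net_ne hGpy)
    obtain ⟨η, hP1, hP2⟩ := RN_exists_eta Gp hwrp hdefp y hyp
    have hnegy : η (Gp.netVector kp y) < 0 := by
      rw [RN_eta_net]
      have hne : (Gp.reactionsFrom y).Nonempty := by
        have hs : y ∈ Gp.sources := RN_mem_sources_of_net_ne hGpy
        unfold ReactionNetwork.sources at hs
        obtain ⟨r, hr, hr1⟩ := Finset.mem_image.mp hs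
        exact ⟨r, Finset.mem_filter.mpr ⟨hr, hr1⟩⟩
      refine Finset.sum_neg (fun r hr => ?_) hne
      obtain ⟨hrR, hr1⟩ := Finset.mem_filter.mp hr
      rw [hP1 r hrR hr1]
      have := hkp r hrR
      nlinarith
    have hnnp : ∀ p, p ≠ y → 0 ≤ η (Gp.netVector kp p) := by
      intro p hp
      rw [RN_eta_net]
      refine Finset.sum_nonneg fun r hr => ?_
      obtain ⟨hrR, hr1⟩ := Finset.mem_filter.mp hr
      exact mul_nonneg (le_of_lt (hkp r hrR)) (hP2 r hrR (hr1.symm ▸ hp))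
    have hy_posm : 0 < η (Gm.netVector km y) := by
      rw [hnetm y, hum, map_neg]
      have hηu : η u < 0 := by
        have := hnegy
        rwa [hnetp y, hup] at this
      linarith
    have hnnm : ∀ p, p ≠ y → 0 ≤ η (Gm.netVector km p) := by
      intro p hp
      rw [hnetm p, ← hsame p hp, ← hnetp p]
      exact hnnp p hp
    have hGmy : Gm.netVector km y ≠ 0 := by
      intro hc
      rw [hc, map_zero] at hy_posm
      exact lt_irrefl 0 hy_posm
    have hym : y ∈ Gm.complexes := RN_sources_subset (RN_mem_sources_of_net_ne hGmy)
    exact RN_extremal hwrm hkm η hym hy_posm hnnm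
  refine ⟨H1, ?_⟩
  intro κ hκ hne
  exact H1 ⟨κ, fun r hr => hκ r (Finset.mem_filter.mp hr).1, hne⟩
end
end
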